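/- arXiv:1010.4692 — 6 statements merged into one kernel-verified Lean document; each statement's English description precedes it below -/
import Mathlib

section
/- Let I ⊆ S = K[x_1,…,x_n] be a monomial ideal such that the maximal graded ideal m = (x_1,…,x_n) belongs to Ass(S/I). Then sdepth_S(I) ≤ ⌈n/2⌉. -/
open MvPolynomial

/-- The Stanley space `u·K[Z]` inside the polynomial ring `K[x_i : i ∈ σ]`:
the `K`-span of all monomials `x^(u+v)` with `supp v ⊆ Z`. -/
noncomputable def stanleySpace (K : Type*) [Field K] {σ : Type*} (u : σ →₀ ℕ) (Z : Set σ) :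
    Submodule K (MvPolynomial σ K) :=
  Submodule.span K
    ((fun v : σ →₀ ℕ => (monomial (u + v) (1 : K) : MvPolynomial σ K)) ''
      {v | (v.support : Set σ) ⊆ Z})

/-- `(u, Z)` (indexed by a finite type `ι`) is a Stanley decomposition of the monomial
ideal `I`: the Stanley spaces `x^(u i)·K[Z i]` are independent and their (direct) sum is `I`
as a `K`-vector space.  (Inside the polynomial ring each Stanley space is automatically a
free `K[Z]`-module.) -/
def IsStanleyDecompOfIdeal {K σ : Type*} [Field K] {ι : Type} [Fintype ι]
    (I : Ideal (MvPolynomial σ K)) (u : ι → (σ →₀ ℕ)) (Z : ι → Finset σ) : Prop :=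
  iSupIndep (fun i => stanleySpace K (u i) (Z i)) ∧
    (⨆ i, stanleySpace K (u i) (Z i)) = Submodule.restrictScalars K I

/-- The Stanley depth of a monomial ideal `I`: the largest `d` such that there is a Stanley
decomposition of `I` all of whose Stanley spaces `u_i K[Z_i]` satisfy `|Z_i| ≥ d`. -/
noncomputable def sdepthIdeal {K σ : Type*} [Field K] (I : Ideal (MvPolynomial σ K)) : ℕ :=
  sSup {d | ∃ (ι : Type) (_ : Fintype ι) (_ : Nonempty ι) (u : ι → (σ →₀ ℕ))
    (Z : ι → Finset σ), IsStanleyDecompOfIdeal I u Z ∧ ∀ i, d ≤ (Z i).card}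

/-- `(u, Z)` is a Stanley decomposition of `S/I`:  each Stanley space `x^(u i)·K[Z i]` meets
`I` trivially (equivalently, its image in `S/I` is a free `K[Z i]`-module), the images of the
Stanley spaces in `S/I` are independent, and they sum to `S/I`. -/
def IsStanleyDecompOfQuotient {K σ : Type*} [Field K] {ι : Type} [Fintype ι]
    (I : Ideal (MvPolynomial σ K)) (u : ι → (σ →₀ ℕ)) (Z : ι → Finset σ) : Prop :=
  (∀ i, Disjoint (stanleySpace K (u i) (Z i)) (Submodule.restrictScalars K I)) ∧
    iSupIndep (fun i =>
      (stanleySpace K (u i) (Z i)).map (Ideal.Quotient.mkₐ K I).toLinearMap) ∧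
    (⨆ i, (stanleySpace K (u i) (Z i)).map (Ideal.Quotient.mkₐ K I).toLinearMap) = ⊤

/-- The Stanley depth of `S/I` for a monomial ideal `I`. -/
noncomputable def sdepthQuot {K σ : Type*} [Field K] (I : Ideal (MvPolynomial σ K)) : ℕ :=
  sSup {d | ∃ (ι : Type) (_ : Fintype ι) (_ : Nonempty ι) (u : ι → (σ →₀ ℕ))
    (Z : ι → Finset σ), IsStanleyDecompOfQuotient I u Z ∧ ∀ i, d ≤ (Z i).card}

/-- A monomial ideal: an ideal generated by monomials. -/
def IsMonomialIdeal {K σ : Type*} [Field K] (I : Ideal (MvPolynomial σ K)) : Prop :=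
  ∃ A : Set (σ →₀ ℕ), I = Ideal.span ((fun a => (monomial a (1 : K) : MvPolynomial σ K)) '' A)

/-- The (exponents of the) minimal monomial generators of a monomial ideal `I`:
monomials in `I` that are not proper multiples of monomials in `I`. -/
def minimalGenerators {K σ : Type*} [Field K] (I : Ideal (MvPolynomial σ K)) :
    Set (σ →₀ ℕ) :=
  {a | (monomial a (1 : K) : MvPolynomial σ K) ∈ I ∧
    ∀ b < a, (monomial b (1 : K) : MvPolynomial σ K) ∉ I}

/-- The depth (w.r.t. the maximal graded ideal `m = (x_1,…,x_n)`) of a module `M` over the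
polynomial ring: the maximal length of a regular sequence on `M` consisting of elements
of `m`. -/
noncomputable def mdepth (K σ : Type*) [Field K] (M : Type*) [AddCommGroup M]
    [Module (MvPolynomial σ K) M] : ℕ :=
  sSup {k | ∃ rs : List (MvPolynomial σ K), rs.length = k ∧
    (∀ r ∈ rs, r ∈ Ideal.span (Set.range (X : σ → MvPolynomial σ K))) ∧
    RingTheory.Sequence.IsRegular M rs}

/-- The height of a prime ideal: the height of the corresponding point
of the prime spectrum, i.e. the supremum of lengths of chains of primes below it. -/
noncomputable def primeHt {R : Type*} [CommRing R] (P : Ideal R) (hP : P.IsPrime) : ℕ∞ :=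
  Order.height (⟨P, hP⟩ : PrimeSpectrum R)


section Aux

variable {K : Type*} [Field K] {σ : Type*}

lemma monomial_one_mem_span_iff (B : Set (σ →₀ ℕ)) (a : σ →₀ ℕ) :
    (monomial a (1 : K) : MvPolynomial σ K) ∈
      Submodule.span K ((fun b => (monomial b (1 : K) : MvPolynomial σ K)) '' B) ↔ a ∈ B := by
  classical
  constructor
  · intro h
    by_contra ha
    have hle : Submodule.span K ((fun b => (monomial b (1 : K) : MvPolynomial σ K)) '' B)
        ≤ LinearMap.ker (lcoeff K a) := by
      rw [Submodule.span_le]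
      rintro _ ⟨b, hb, rfl⟩
      have hba : b ≠ a := fun hba => ha (hba ▸ hb)
      show (monomial b) (1:K) ∈ LinearMap.ker (lcoeff K a)
      rw [LinearMap.mem_ker, lcoeff_apply, coeff_monomial, if_neg hba]
    have := hle h
    rw [LinearMap.mem_ker, lcoeff_apply, coeff_monomial, if_pos rfl] at this
    exact one_ne_zero this
  · intro h; exact Submodule.subset_span ⟨a, h, rfl⟩

/-- exponent set of a Stanley space -/
def expSet (u : σ →₀ ℕ) (Z : Set σ) : Set (σ →₀ ℕ) :=
  (fun w => u + w) '' {w : σ →₀ ℕ | (w.support : Set σ) ⊆ Z}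

lemma stanleySpace_eq_span (u : σ →₀ ℕ) (Z : Set σ) :
    stanleySpace K u Z =
      Submodule.span K ((fun b => (monomial b (1 : K) : MvPolynomial σ K)) '' expSet u Z) := by
  rw [stanleySpace, expSet, Set.image_image]

lemma monomial_one_mem_stanleySpace_iff (u : σ →₀ ℕ) (Z : Set σ) (a : σ →₀ ℕ) :
    (monomial a (1 : K) : MvPolynomial σ K) ∈ stanleySpace K u Z ↔ a ∈ expSet u Z := by
  rw [stanleySpace_eq_span, monomial_one_mem_span_iff]

lemma monomial_one_mem_iSup_iff {ι : Type} (u : ι → (σ →₀ ℕ)) (Z : ι → Set σ) (a : σ →₀ ℕ) :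
    (monomial a (1 : K) : MvPolynomial σ K) ∈ (⨆ i, stanleySpace K (u i) (Z i)) ↔
      ∃ i, a ∈ expSet (u i) (Z i) := by
  have : (⨆ i, stanleySpace K (u i) (Z i)) =
      Submodule.span K ((fun b => (monomial b (1 : K) : MvPolynomial σ K)) ''
        ⋃ i, expSet (u i) (Z i)) := by
    rw [Set.image_iUnion, Submodule.span_iUnion]
    exact iSup_congr fun i => stanleySpace_eq_span _ _
  rw [this, monomial_one_mem_span_iff, Set.mem_iUnion]

lemma monomial_coeff_mem {I : Ideal (MvPolynomial σ K)} (hI : IsMonomialIdeal I)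
    {p : MvPolynomial σ K} (hp : p ∈ I) (b : σ →₀ ℕ) :
    (monomial b (coeff b p) : MvPolynomial σ K) ∈ I := by
  classical
  obtain ⟨A, rfl⟩ := hI
  induction hp using Submodule.span_induction generalizing b with
  | mem x hx =>
    obtain ⟨c, hc, rfl⟩ := hx
    by_cases hcb : c = b
    · subst hcb
      rw [coeff_monomial, if_pos rfl]
      exact Ideal.subset_span ⟨c, hc, rfl⟩
    · rw [coeff_monomial, if_neg hcb, map_zero]
      exact zero_mem _
  | zero => simp
  | add x y _ _ hx hy =>
    rw [coeff_add, map_add]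
    exact add_mem (hx b) (hy b)
  | smul r x _ hx =>
    rw [smul_eq_mul, coeff_mul, map_sum]
    refine sum_mem fun c hc => ?_
    rw [← (Finset.HasAntidiagonal.mem_antidiagonal.mp hc : c.1 + c.2 = b), ← monomial_mul]
    exact Ideal.mul_mem_left _ _ (hx c.2)

end Aux

/-- If the maximal graded ideal `(x_1,…,x_n)` is an associated prime of `S/I`, then
`sdepth I ≤ ⌈n/2⌉`. -/
theorem sdepth_le_of_maxIdeal_mem_associatedPrimes {K : Type*} [Field K] {n : ℕ}
    (I : Ideal (MvPolynomial (Fin n) K)) (hI : IsMonomialIdeal I)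
    (hm : Ideal.span (Set.range (X : Fin n → MvPolynomial (Fin n) K)) ∈
      associatedPrimes (MvPolynomial (Fin n) K) ((MvPolynomial (Fin n) K) ⧸ I)) :
    sdepthIdeal I ≤ (n + 1) / 2 := by
  classical
  unfold sdepthIdeal
  refine csSup_le' ?_
  rintro d ⟨ι, _, ⟨i₀⟩, u, Z, ⟨hind, hsum⟩, hcard⟩
  rcases Nat.eq_zero_or_pos n with hn | hn
  · subst hn
    have h1 := hcard i₀
    have h0 : (Z i₀).card ≤ 0 := by
      simpa using Finset.card_le_univ (Z i₀)
    omega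
  obtain ⟨hmp, x, hx⟩ := isAssociatedPrime_iff.mp hm
  obtain ⟨f, rfl⟩ := Ideal.Quotient.mk_surjective x
  have mem_m : ∀ g : MvPolynomial (Fin n) K,
      g ∈ Ideal.span (Set.range (X : Fin n → MvPolynomial (Fin n) K)) ↔ g * f ∈ I := by
    intro g
    rw [hx, Submodule.mem_colon_singleton, Submodule.mem_bot]
    have hsm : g • (Ideal.Quotient.mk I f) = Ideal.Quotient.mk I (g * f) := rfl
    rw [hsm, Ideal.Quotient.eq_zero_iff_mem]
  have hf : f ∉ I := by
    intro hfI
    have h1 : (1 : MvPolynomial (Fin n) K) ∈ Ideal.span (Set.range (X : Fin n → _)) := by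
      rw [mem_m]; simpa using hfI
    exact hmp.ne_top ((Ideal.eq_top_iff_one _).mpr h1)
  have hXf : ∀ i : Fin n, X i * f ∈ I := fun i =>
    (mem_m (X i)).mp (Ideal.subset_span ⟨i, rfl⟩)
  obtain ⟨v, hv0, hvI⟩ :
      ∃ v, coeff v f ≠ 0 ∧ (monomial v (1:K) : MvPolynomial (Fin n) K) ∉ I := by
    by_contra hcon
    push_neg at hcon
    apply hf
    rw [← support_sum_monomial_coeff f]
    refine sum_mem fun v hv => ?_
    have h1 : (monomial v (1:K) : MvPolynomial (Fin n) K) ∈ I :=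
      hcon v (mem_support_iff.mp hv)
    have h2 : (monomial v (coeff v f) : MvPolynomial (Fin n) K)
        = C (coeff v f) * monomial v 1 := by
      rw [C_mul_monomial, mul_one]
    rw [h2]; exact Ideal.mul_mem_left _ _ h1
  have hstep : ∀ i : Fin n,
      (monomial (v + Finsupp.single i 1) (1:K) : MvPolynomial (Fin n) K) ∈ I := by
    intro i
    have h1 := monomial_coeff_mem hI (hXf i) (Finsupp.single i 1 + v)
    rw [coeff_X_mul] at h1
    have h2 : (monomial (Finsupp.single i 1 + v) (1:K) : MvPolynomial (Fin n) K)
        = C (coeff v f)⁻¹ * monomial (Finsupp.single i 1 + v) (coeff v f) := by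
      rw [C_mul_monomial, inv_mul_cancel₀ hv0]
    rw [show v + Finsupp.single i 1 = Finsupp.single i 1 + v from add_comm _ _, h2]
    exact Ideal.mul_mem_left _ _ h1
  have hmemI : ∀ a : Fin n →₀ ℕ,
      ((monomial a (1:K) : MvPolynomial (Fin n) K) ∈ I ↔
        ∃ j, a ∈ expSet (u j) ((Z j : Set (Fin n)))) := by
    intro a
    have h1 := monomial_one_mem_iSup_iff (K := K) u (fun j => ((Z j : Set (Fin n)))) a
    rw [hsum, Submodule.restrictScalars_mem] at h1
    exact h1
  have hchoice : ∀ i : Fin n, ∃ j,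
      (v + Finsupp.single i 1) ∈ expSet (u j) ((Z j : Set (Fin n))) :=
    fun i => (hmemI _).mp (hstep i)
  choose k hk using hchoice
  have hchoice2 : ∀ i : Fin n, ∃ w : Fin n →₀ ℕ,
      ((w.support : Set (Fin n)) ⊆ (Z (k i) : Set (Fin n))) ∧
        u (k i) + w = v + Finsupp.single i 1 := fun i => hk i
  choose w hws hwe using hchoice2
  have happ : ∀ (i : Fin n) (t : Fin n),
      u (k i) t + w i t = v t + Finsupp.single i 1 t := by
    intro i t
    rw [← Finsupp.add_apply, ← Finsupp.add_apply, hwe i]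
  have hkinj : Function.Injective k := by
    intro i j hij
    by_contra hne
    have hui : ∀ t, u (k i) t ≤ v t := by
      intro t
      have h1 := happ i t
      have h2 := happ j t
      rw [← hij] at h2
      have hsing : Finsupp.single i 1 t = 0 ∨ Finsupp.single j 1 t = 0 := by
        rcases eq_or_ne j t with h | h
        · left; exact Finsupp.single_eq_of_ne' (fun h2 => hne (h2.trans h.symm))
        · right; exact Finsupp.single_eq_of_ne' h
      omega
    have hvmem : v ∈ expSet (u (k i)) ((Z (k i) : Set (Fin n))) := by
      refine ⟨v - u (k i), ?_, ?_⟩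
      · intro t ht
        have ht' := Finsupp.mem_support_iff.mp (Finset.mem_coe.mp ht)
        rw [Finsupp.tsub_apply] at ht'
        have htv : u (k i) t < v t := by
          have := hui t
          omega
        have hwt : w i t ≠ 0 := by
          have h1 := happ i t
          omega
        exact hws i (Finset.mem_coe.mpr (Finsupp.mem_support_iff.mpr hwt))
      · show u (k i) + (v - u (k i)) = v
        ext t
        rw [Finsupp.add_apply, Finsupp.tsub_apply]
        have := hui t
        omega
    exact hvI ((hmemI v).mpr ⟨k i, hvmem⟩)
  have hC : ∀ i j : Fin n, i ≠ j → j ∈ Z (k i) → i ∉ Z (k j) := by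
    intro i j hij hj hi
    have hkij : k i ≠ k j := fun h => hij (hkinj h)
    have m1 : (monomial (v + Finsupp.single i 1 + Finsupp.single j 1) (1:K)
        : MvPolynomial (Fin n) K) ∈ stanleySpace K (u (k i)) ((Z (k i) : Set (Fin n))) := by
      rw [monomial_one_mem_stanleySpace_iff]
      refine ⟨w i + Finsupp.single j 1, ?_, ?_⟩
      · intro t ht
        have ht' := Finsupp.support_add (Finset.mem_coe.mp ht)
        rcases Finset.mem_union.mp ht' with h | h
        · exact hws i (Finset.mem_coe.mpr h)
        · have : t = j := Finset.mem_singleton.mp (Finsupp.support_single_subset h)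
          subst this
          exact Finset.mem_coe.mpr hj
      · show u (k i) + (w i + Finsupp.single j 1) = v + Finsupp.single i 1 + Finsupp.single j 1
        rw [← add_assoc, hwe i]
    have m2 : (monomial (v + Finsupp.single i 1 + Finsupp.single j 1) (1:K)
        : MvPolynomial (Fin n) K) ∈ stanleySpace K (u (k j)) ((Z (k j) : Set (Fin n))) := by
      rw [add_right_comm, monomial_one_mem_stanleySpace_iff]
      refine ⟨w j + Finsupp.single i 1, ?_, ?_⟩
      · intro t ht
        have ht' := Finsupp.support_add (Finset.mem_coe.mp ht)
        rcases Finset.mem_union.mp ht' with h | h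
        · exact hws j (Finset.mem_coe.mpr h)
        · have : t = i := Finset.mem_singleton.mp (Finsupp.support_single_subset h)
          subst this
          exact Finset.mem_coe.mpr hi
      · show u (k j) + (w j + Finsupp.single i 1) = v + Finsupp.single j 1 + Finsupp.single i 1
        rw [← add_assoc, hwe j]
    have h0 := Submodule.disjoint_def.mp (hind.pairwiseDisjoint hkij) _ m1 m2
    rw [monomial_eq_zero] at h0
    exact one_ne_zero h0
  set s : Finset ((_ : Fin n) × Fin n) :=
    Finset.univ.sigma (fun i => (Z (k i)).erase i) with hs
  have hmems : ∀ p : (_ : Fin n) × Fin n, p ∈ s → p.2 ≠ p.1 ∧ p.2 ∈ Z (k p.1) := by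
    intro p hp
    rw [hs, Finset.mem_sigma] at hp
    exact Finset.mem_erase.mp hp.2
  have hub : s.card ≤ n.choose 2 := by
    have hcardimg := Finset.card_le_card_of_injOn
      (fun p : (_ : Fin n) × Fin n => ({p.1, p.2} : Finset (Fin n))) (s := s)
      (t := Finset.powersetCard 2 (Finset.univ : Finset (Fin n)))
      (fun p hp => by
        rw [Finset.mem_coe, Finset.mem_powersetCard]
        exact ⟨Finset.subset_univ _, Finset.card_pair fun h => (hmems p hp).1 h.symm⟩)
      ?_
    · rw [Finset.card_powersetCard, Finset.card_univ, Fintype.card_fin] at hcardimg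
      exact hcardimg
    · rintro ⟨i, j⟩ hp ⟨i', j'⟩ hq heq
      simp only [Finset.mem_coe] at hp hq
      obtain ⟨hji, hjZ⟩ := hmems _ hp
      obtain ⟨hji', hjZ'⟩ := hmems _ hq
      have hij : i ≠ j := fun h => hji h.symm
      have hij' : i' ≠ j' := fun h => hji' h.symm
      simp only at heq
      have hi : i = i' ∨ i = j' := by
        have : i ∈ ({i', j'} : Finset (Fin n)) := heq ▸ Finset.mem_insert_self i {j}
        simpa using this
      have hj' : j = i' ∨ j = j' := by
        have : j ∈ ({i', j'} : Finset (Fin n)) := by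
          rw [← heq]; simp
        simpa using this
      have hi' : i' = i ∨ i' = j := by
        have : i' ∈ ({i, j} : Finset (Fin n)) := heq ▸ Finset.mem_insert_self i' {j'}
        simpa using this
      rcases hi with h1 | h1
      · subst h1
        rcases hj' with h2 | h2
        · exact absurd h2.symm hij
        · subst h2; rfl
      · have hi'j : i' = j := by
          rcases hi' with h3 | h3
          · exact absurd (h3.trans h1) hij'
          · exact h3
        rw [hi'j, ← h1] at hjZ'
        exact absurd hjZ' (hC i j hij hjZ)
  have hlb : n * (d - 1) ≤ s.card := by
    rw [hs, Finset.card_sigma]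
    calc n * (d - 1) = ∑ _i : Fin n, (d - 1) := by
          rw [Finset.sum_const, Finset.card_univ, Fintype.card_fin, smul_eq_mul]
      _ ≤ ∑ i, ((Z (k i)).erase i).card := by
          refine Finset.sum_le_sum fun i _ => ?_
          have h1 : d ≤ (Z (k i)).card := hcard (k i)
          have h2 := Finset.pred_card_le_card_erase (s := Z (k i)) (a := i)
          omega
  have hchoose : n.choose 2 = n * (n - 1) / 2 := Nat.choose_two_right n
  have hfin : n * (d - 1) ≤ n * (n - 1) / 2 := le_trans hlb (hchoose ▸ hub)
  have h2 : n * (2 * (d - 1)) ≤ n * (n - 1) := by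
    have ha : 2 * (n * (d - 1)) ≤ 2 * (n * (n - 1) / 2) := by omega
    have hb : 2 * (n * (n - 1) / 2) ≤ n * (n - 1) := by omega
    calc n * (2 * (d - 1)) = 2 * (n * (d - 1)) := by ring
      _ ≤ 2 * (n * (n - 1) / 2) := ha
      _ ≤ n * (n - 1) := hb
  have h3 : 2 * (d - 1) ≤ n - 1 := Nat.le_of_mul_le_mul_left h2 hn
  omega
end

section
/- Let P_1, P_2, P_3 be monomial prime ideals of S = K[x_1,…,x_n] with P_i ⊄ P_j for all i ≠ j and P_1 + P_2 + P_3 = m = (x_1,…,x_n), and let I = P_1 ∩ P_2 ∩ P_3. Let D : S/I = ⊕_{i=1}^m u_iK[Z_i] be a Stanley decomposition of S/I such that u_1 = 1 and Z_1 ⊆ (G(P_1) ∪ G(P_2)) \ G(P_3). Then sdepth(D) ≤ max{ dim S/(P_2 + P_3), dim S/(P_1 + P_3) } + ⌈(height(P_3) − t)/2⌉, where t = |G(P_1) ∩ G(P_2) ∩ G(P_3)|. -/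
open MvPolynomial

lemma mem_varSpan_iff {K σ : Type*} [Field K] (A : Set σ) (p : MvPolynomial σ K) :
    p ∈ Ideal.span ((fun j => (X j : MvPolynomial σ K)) '' A) ↔
      ∀ a ∈ p.support, ∃ j ∈ A, j ∈ a.support := by
  classical
  constructor
  · intro hp a ha
    by_contra hcon
    push_neg at hcon
    set φ : MvPolynomial σ K →ₐ[K] MvPolynomial σ K :=
      aeval (fun j => if j ∈ A then (0 : MvPolynomial σ K) else X j) with hφ
    have hker : Ideal.span ((fun j => (X j : MvPolynomial σ K)) '' A) ≤
        RingHom.ker φ.toRingHom := by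
      rw [Ideal.span_le]
      rintro _ ⟨j, hj, rfl⟩
      simp [RingHom.mem_ker, hφ, hj]
    have hφp : φ p = 0 := hker hp
    have hmono : ∀ b : σ →₀ ℕ, ∀ c : K, φ (monomial b c) =
        if ∀ j ∈ A, j ∉ b.support then monomial b c else 0 := by
      intro b c
      rw [hφ, aeval_monomial]
      split_ifs with hb
      · have h1 : (b.prod fun i k => (if i ∈ A then (0 : MvPolynomial σ K) else X i) ^ k) =
            b.prod fun i k => (X i) ^ k := by
          apply Finset.prod_congr rfl
          intro j hj
          have : j ∉ A := fun hjA => hb j hjA hj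
          simp [this]
        rw [h1, monomial_eq, algebraMap_eq]
      · push_neg at hb
        obtain ⟨j, hjA, hjb⟩ := hb
        have : (b.prod fun i k => (if i ∈ A then (0 : MvPolynomial σ K) else X i) ^ k) = 0 := by
          apply Finset.prod_eq_zero hjb
          simp [hjA, Finsupp.mem_support_iff.mp hjb]
        rw [this, mul_zero]
    have hcoeff : coeff a (φ p) = coeff a p := by
      conv_lhs => rw [← support_sum_monomial_coeff p]
      rw [map_sum, Finset.sum_congr rfl (fun b _ => hmono b (coeff b p)), coeff_sum]
      rw [Finset.sum_eq_single_of_mem a ha]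
      · rw [if_pos hcon, coeff_monomial, if_pos rfl]
      · intro b _ hba
        split_ifs with h
        · simp [coeff_monomial, hba]
        · simp
    rw [hφp] at hcoeff
    simp only [coeff_zero] at hcoeff
    exact (mem_support_iff.mp ha) hcoeff.symm
  · intro h
    have : (∑ a ∈ p.support, monomial a (coeff a p)) ∈
        Ideal.span ((fun j => (X j : MvPolynomial σ K)) '' A) := by
      apply Ideal.sum_mem
      intro a ha
      obtain ⟨j, hjA, hja⟩ := h a ha
      have hle : Finsupp.single j 1 ≤ a := by
        rw [Finsupp.single_le_iff]
        exact Nat.one_le_iff_ne_zero.mpr (Finsupp.mem_support_iff.mp hja)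
      have heq : monomial a (coeff a p) = monomial (a - Finsupp.single j 1) (coeff a p) * X j := by
        rw [X, monomial_mul, mul_one, tsub_add_cancel_of_le hle]
      rw [heq]
      exact Ideal.mul_mem_left _ _ (Ideal.subset_span ⟨j, hjA, rfl⟩)
    rwa [support_sum_monomial_coeff] at this


lemma finsupp_add_eq_single {σ : Type*} {a b : σ →₀ ℕ} {c : σ}
    (h : a + b = Finsupp.single c 1) :
    (a = Finsupp.single c 1 ∧ b = 0) ∨ (a = 0 ∧ b = Finsupp.single c 1) := by
  classical
  have hc : a c + b c = 1 := by
    rw [← Finsupp.add_apply, h, Finsupp.single_eq_same]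
  have h0 : ∀ x, x ≠ c → a x = 0 ∧ b x = 0 := by
    intro x hx
    have : a x + b x = 0 := by
      rw [← Finsupp.add_apply, h, Finsupp.single_eq_of_ne' (Ne.symm hx)]
    omega
  by_cases hac : a c = 0
  · right
    constructor
    · ext x
      by_cases hx : x = c
      · subst hx; simpa using hac
      · simpa using (h0 x hx).1
    · ext x
      by_cases hx : x = c
      · subst hx; rw [Finsupp.single_eq_same]; omega
      · rw [Finsupp.single_eq_of_ne' (Ne.symm hx)]; exact (h0 x hx).2
  · left
    constructor
    · ext x
      by_cases hx : x = c
      · subst hx; rw [Finsupp.single_eq_same]; omega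
      · rw [Finsupp.single_eq_of_ne' (Ne.symm hx)]; exact (h0 x hx).1
    · ext x
      by_cases hx : x = c
      · subst hx; simp; omega
      · simpa using (h0 x hx).2

lemma exists_small_outdeg {α : Type*} [DecidableEq α] (V : Finset α) (g : α → Finset α)
    (hanti : ∀ a ∈ V, ∀ b ∈ V, a ≠ b → b ∈ g a → a ∉ g b) (hV : V.Nonempty) :
    ∃ a ∈ V, 2 * ((g a ∩ V).erase a).card ≤ V.card - 1 := by
  by_contra hcon
  push_neg at hcon
  set s : α → Finset α := fun a => (g a ∩ V).erase a with hs
  set T : Finset ((_ : α) × α) := V.sigma (fun a => s a) with hT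
  set E : Finset (α × α) := T.image (fun p => (p.1, p.2)) with hE
  have hmemE : ∀ p : α × α, p ∈ E ↔ p.1 ∈ V ∧ p.2 ∈ s p.1 := by
    intro p
    constructor
    · intro hp
      obtain ⟨⟨a, b⟩, hab, hpe⟩ := Finset.mem_image.mp hp
      obtain ⟨h1, h2⟩ := Finset.mem_sigma.mp hab
      rw [← hpe]
      exact ⟨h1, h2⟩
    · rintro ⟨h1, h2⟩
      exact Finset.mem_image.mpr ⟨⟨p.1, p.2⟩, Finset.mem_sigma.mpr ⟨h1, h2⟩, rfl⟩
  have hinj : Set.InjOn (fun p : (_ : α) × α => (p.1, p.2)) T := by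
    rintro ⟨a, b⟩ _ ⟨c, d⟩ _ h
    simp only [Prod.mk.injEq] at h
    simp [h.1, h.2]
  have hEcard : E.card = ∑ a ∈ V, (s a).card := by
    rw [hE, Finset.card_image_of_injOn hinj, hT, Finset.card_sigma]
  have hsmem : ∀ a b, b ∈ s a ↔ b ≠ a ∧ b ∈ g a ∧ b ∈ V := by
    intro a b
    simp [hs, Finset.mem_erase, Finset.mem_inter, and_assoc]
  have hEsub : E ⊆ V.offDiag := by
    intro p hp
    obtain ⟨h1, h2⟩ := (hmemE p).mp hp
    obtain ⟨hne, _, hV2⟩ := (hsmem p.1 p.2).mp h2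
    exact Finset.mem_offDiag.mpr ⟨h1, hV2, Ne.symm hne⟩
  have hswapsub : E.image Prod.swap ⊆ V.offDiag := by
    intro p hp
    obtain ⟨q, hq, hqe⟩ := Finset.mem_image.mp hp
    have := Finset.mem_offDiag.mp (hEsub hq)
    rw [← hqe]
    exact Finset.mem_offDiag.mpr ⟨this.2.1, this.1, (this.2.2).symm⟩
  have hdisj : Disjoint E (E.image Prod.swap) := by
    rw [Finset.disjoint_left]
    intro p hp hp'
    obtain ⟨h1, h2⟩ := (hmemE p).mp hp
    obtain ⟨q, hq, hqe⟩ := Finset.mem_image.mp hp'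
    have hqE : q = Prod.swap p := by
      have : Prod.swap (Prod.swap q) = Prod.swap p := by rw [hqe]
      simpa using this
    rw [hqE] at hq
    obtain ⟨h1', h2'⟩ := (hmemE _).mp hq
    obtain ⟨hne, hg, hVmem⟩ := (hsmem p.1 p.2).mp h2
    obtain ⟨hne', hg', hVmem'⟩ := (hsmem p.2 p.1).mp h2'
    exact hanti p.1 h1 p.2 hVmem (Ne.symm hne) hg hg'
  have hswapcard : (E.image Prod.swap).card = E.card :=
    Finset.card_image_of_injective _ Prod.swap_injective
  have h2T : 2 * E.card ≤ V.card * V.card - V.card := by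
    have := Finset.card_le_card (Finset.union_subset hEsub hswapsub)
    rw [Finset.card_union_of_disjoint hdisj, hswapcard, Finset.offDiag_card] at this
    omega
  have hlow : V.card * V.card ≤ 2 * E.card := by
    rw [hEcard]
    calc V.card * V.card = ∑ _a ∈ V, V.card := by rw [Finset.sum_const, smul_eq_mul, mul_comm]
    _ ≤ ∑ a ∈ V, 2 * (s a).card := by
        apply Finset.sum_le_sum
        intro a ha
        have := hcon a ha
        show V.card ≤ 2 * ((g a ∩ V).erase a).card
        omega
    _ = 2 * ∑ a ∈ V, (s a).card := by rw [Finset.mul_sum]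
  have hk : 1 ≤ V.card := Finset.card_pos.mpr hV
  have : V.card * V.card - V.card < V.card * V.card := by
    apply Nat.sub_lt _ (by omega)
    positivity
  omega

set_option maxHeartbeats 1000000 in
/-- **Lemma 2.1.** Let `I = P_1 ∩ P_2 ∩ P_3` for incomparable monomial primes with
`P_1 + P_2 + P_3 = m`, and let `D : S/I = ⊕ u_i K[Z_i]` be a Stanley decomposition with
`u_1 = 1` and `Z_1 ⊆ (G(P_1) ∪ G(P_2)) \ G(P_3)`.  Then
`sdepth D ≤ max(dim S/(P_2+P_3), dim S/(P_1+P_3)) + ⌈(height P_3 - t)/2⌉`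
where `t = |G(P_1) ∩ G(P_2) ∩ G(P_3)|`.  (Here `dim S/(P_i+P_3) = n - |G(P_i) ∪ G(P_3)|`
and `height P_3 = |G(P_3)|`.) -/
theorem sdepth_decomp_le {K : Type*} [Field K] {n m : ℕ} (hm : 0 < m)
    (A B C : Finset (Fin n))
    (P₁ P₂ P₃ I : Ideal (MvPolynomial (Fin n) K))
    (hP₁ : P₁ = Ideal.span ((fun j => (X j : MvPolynomial (Fin n) K)) '' (A : Set (Fin n))))
    (hP₂ : P₂ = Ideal.span ((fun j => (X j : MvPolynomial (Fin n) K)) '' (B : Set (Fin n))))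
    (hP₃ : P₃ = Ideal.span ((fun j => (X j : MvPolynomial (Fin n) K)) '' (C : Set (Fin n))))
    (h12 : ¬ P₁ ≤ P₂) (h21 : ¬ P₂ ≤ P₁) (h13 : ¬ P₁ ≤ P₃) (h31 : ¬ P₃ ≤ P₁)
    (h23 : ¬ P₂ ≤ P₃) (h32 : ¬ P₃ ≤ P₂)
    (hsum : P₁ ⊔ P₂ ⊔ P₃ = Ideal.span (Set.range (X : Fin n → MvPolynomial (Fin n) K)))
    (hI : I = P₁ ⊓ P₂ ⊓ P₃)
    (u : Fin m → (Fin n →₀ ℕ)) (Z : Fin m → Finset (Fin n))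
    (hD : IsStanleyDecompOfQuotient I u Z)
    (hu1 : u ⟨0, hm⟩ = 0)
    (hZ1 : Z ⟨0, hm⟩ ⊆ (A ∪ B) \ C) :
    (Finset.univ.inf' (Finset.univ_nonempty_iff.mpr ⟨⟨0, hm⟩⟩) fun i => (Z i).card) ≤
      max (n - (B ∪ C).card) (n - (A ∪ C).card) +
        (C.card - (A ∩ B ∩ C).card + 1) / 2 := by
  classical
  obtain ⟨hDisj, hIndep, hTop⟩ := hD
  set i₁ : Fin m := ⟨0, hm⟩ with hi₁
  set V : Fin m → Submodule K (MvPolynomial (Fin n) K) :=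
    fun i => stanleySpace K (u i) (Z i) with hV
  set mk' := (Ideal.Quotient.mkₐ K I).toLinearMap with hmk'
  have hmemV : ∀ (i : Fin m) (v : Fin n →₀ ℕ), v.support ⊆ Z i →
      (monomial (u i + v) 1 : MvPolynomial (Fin n) K) ∈ V i := by
    intro i v hv
    exact Submodule.subset_span ⟨v, by simpa using hv, rfl⟩
  have hImem : ∀ p : MvPolynomial (Fin n) K, p ∈ I ↔ ∀ a ∈ p.support,
      (∃ j ∈ A, j ∈ a.support) ∧ (∃ j ∈ B, j ∈ a.support) ∧ (∃ j ∈ C, j ∈ a.support) := by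
    intro p
    rw [hI, Ideal.mem_inf, Ideal.mem_inf, hP₁, hP₂, hP₃,
      mem_varSpan_iff, mem_varSpan_iff, mem_varSpan_iff]
    constructor
    · rintro ⟨⟨h1, h2⟩, h3⟩ a ha
      exact ⟨by simpa using h1 a ha, by simpa using h2 a ha, by simpa using h3 a ha⟩
    · intro h
      exact ⟨⟨fun a ha => by simpa using (h a ha).1, fun a ha => by simpa using (h a ha).2.1⟩,
        fun a ha => by simpa using (h a ha).2.2⟩
  have hMI : ∀ a : Fin n →₀ ℕ, ((monomial a 1 : MvPolynomial (Fin n) K) ∈ I ↔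
      ((∃ j ∈ A, j ∈ a.support) ∧ (∃ j ∈ B, j ∈ a.support) ∧ (∃ j ∈ C, j ∈ a.support))) := by
    intro a
    rw [hImem]
    simp [support_monomial]
  have h1notI : (1 : MvPolynomial (Fin n) K) ∉ I := by
    intro h
    have := (hImem 1).mp h 0 (by simp)
    simp at this
  have hext : ∀ a : Fin n →₀ ℕ,
      ¬((∃ j ∈ A, j ∈ a.support) ∧ (∃ j ∈ B, j ∈ a.support) ∧ (∃ j ∈ C, j ∈ a.support)) →
      ∃ i : Fin m, ∃ v : Fin n →₀ ℕ, v.support ⊆ Z i ∧ u i + v = a := by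
    intro a hna
    have h2 : Submodule.map mk' (⨆ i, V i) = ⊤ := by
      rw [Submodule.map_iSup]; exact hTop
    have h3 : mk' (monomial a 1) ∈ Submodule.map mk' (⨆ i, V i) := by rw [h2]; trivial
    obtain ⟨v0, hv0, hv0eq⟩ := Submodule.mem_map.mp h3
    have hw : (monomial a (1:K)) - v0 ∈ I := by
      rw [← Ideal.Quotient.eq]
      rw [hmk', AlgHom.toLinearMap_apply, AlgHom.toLinearMap_apply,
        Ideal.Quotient.mkₐ_eq_mk] at hv0eq
      exact hv0eq.symm
    by_contra hcon
    push_neg at hcon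
    have hker : (⨆ i, V i) ≤ LinearMap.ker (lcoeff K a) := by
      refine iSup_le fun i => ?_
      refine Submodule.span_le.mpr ?_
      rintro _ ⟨v, hv, rfl⟩
      simp only [SetLike.mem_coe, LinearMap.mem_ker, lcoeff_apply, coeff_monomial]
      rw [if_neg]
      intro he
      exact hcon i v (by simpa using hv) he
    have hc0 : coeff a v0 = 0 := hker hv0
    have hcw : coeff a ((monomial a (1:K)) - v0) = 0 := by
      by_contra hne
      have hmem : a ∈ ((monomial a (1:K)) - v0).support := mem_support_iff.mpr hne
      exact hna ((hImem _).mp hw a hmem)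
    rw [coeff_sub, coeff_monomial, if_pos rfl, hc0, sub_zero] at hcw
    exact one_ne_zero hcw
  have hPD : Pairwise (Function.onFun Disjoint fun i => (V i).map mk') := hIndep.pairwiseDisjoint
  have hmkne : ∀ (i : Fin m) (a : Fin n →₀ ℕ),
      (monomial a 1 : MvPolynomial (Fin n) K) ∈ V i →
      mk' (monomial a 1) ≠ 0 ∧ (monomial a 1 : MvPolynomial (Fin n) K) ∉ I := by
    intro i a hmem
    have hnotI : (monomial a (1:K)) ∉ I := by
      intro hI'
      have h0 : (monomial a (1:K)) = 0 :=
        (Submodule.disjoint_def.mp (hDisj i)) _ hmem (by simpa using hI')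
      exact one_ne_zero (monomial_eq_zero.mp h0)
    refine ⟨?_, hnotI⟩
    intro h0
    apply hnotI
    rw [hmk', AlgHom.toLinearMap_apply, Ideal.Quotient.mkₐ_eq_mk] at h0
    exact Ideal.Quotient.eq_zero_iff_mem.mp h0
  have hu0 : ∀ i : Fin m, u i = 0 → i = i₁ := by
    intro i hui
    by_contra hne
    have h1i : (1 : MvPolynomial (Fin n) K) ∈ V i := by
      have := hmemV i 0 (by simp)
      simpa [hui, monomial_zero'] using this
    have h1i₁ : (1 : MvPolynomial (Fin n) K) ∈ V i₁ := by
      have := hmemV i₁ 0 (by simp)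
      simpa [hu1, monomial_zero'] using this
    have hd : Disjoint ((V i).map mk') ((V i₁).map mk') := hPD hne
    have h10 : mk' (1 : MvPolynomial (Fin n) K) = 0 :=
      Submodule.disjoint_def.mp hd _ (Submodule.mem_map_of_mem h1i)
        (Submodule.mem_map_of_mem h1i₁)
    apply h1notI
    rw [hmk', AlgHom.toLinearMap_apply, Ideal.Quotient.mkₐ_eq_mk] at h10
    exact Ideal.Quotient.eq_zero_iff_mem.mp h10
  set C' : Finset (Fin n) := C \ (A ∩ B) with hC'
  have hC'ne : C'.Nonempty := by
    have hns : ¬ (C : Set (Fin n)) ⊆ (A : Set (Fin n)) := by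
      intro hsub
      exact h31 (by rw [hP₃, hP₁]; exact Ideal.span_mono (Set.image_mono hsub))
    obtain ⟨c, hcC, hcA⟩ := Set.not_subset.mp hns
    exact ⟨c, Finset.mem_sdiff.mpr ⟨by exact_mod_cast hcC,
      fun hmem => hcA (by exact_mod_cast (Finset.mem_inter.mp hmem).1)⟩⟩
  have hchoose : ∀ c ∈ C', ∃ i : Fin m,
      u i = Finsupp.single c 1 ∧ (Z i ∩ A = ∅ ∨ Z i ∩ B = ∅) := by
    intro c hc
    obtain ⟨hcC, hcAB⟩ := Finset.mem_sdiff.mp hc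
    have hna : ¬((∃ j ∈ A, j ∈ (Finsupp.single c 1).support) ∧
        (∃ j ∈ B, j ∈ (Finsupp.single c 1).support) ∧
        (∃ j ∈ C, j ∈ (Finsupp.single c 1).support)) := by
      rw [Finsupp.support_single_ne_zero c one_ne_zero]
      rintro ⟨⟨j1, hj1, hj1'⟩, ⟨j2, hj2, hj2'⟩, -⟩
      rw [Finset.mem_singleton] at hj1' hj2'
      subst hj1'
      subst hj2'
      exact hcAB (Finset.mem_inter.mpr ⟨hj1, hj2⟩)
    obtain ⟨i, v, hvsup, hadd⟩ := hext _ hna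
    rcases finsupp_add_eq_single hadd with ⟨hui, -⟩ | ⟨hui, hv0⟩
    · refine ⟨i, hui, ?_⟩
      by_contra hboth
      push_neg at hboth
      obtain ⟨hA, hB⟩ := hboth
      obtain ⟨a₀, ha₀⟩ := hA
      obtain ⟨b₀, hb₀⟩ := hB
      obtain ⟨ha₀Z, ha₀A⟩ := Finset.mem_inter.mp ha₀
      obtain ⟨hb₀Z, hb₀B⟩ := Finset.mem_inter.mp hb₀
      set w : Fin n →₀ ℕ := Finsupp.single a₀ 1 + Finsupp.single b₀ 1 with hw
      have hwsup : w.support ⊆ Z i := by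
        intro x hx
        have hx2 := Finsupp.support_add hx
        rw [Finsupp.support_single_ne_zero _ one_ne_zero,
          Finsupp.support_single_ne_zero _ one_ne_zero] at hx2
        rcases Finset.mem_union.mp hx2 with h | h
        · rw [Finset.mem_singleton] at h; subst h; exact ha₀Z
        · rw [Finset.mem_singleton] at h; subst h; exact hb₀Z
      have hmem := hmemV i w hwsup
      apply (hmkne i _ hmem).2
      rw [hMI]
      refine ⟨⟨a₀, ha₀A, ?_⟩, ⟨b₀, hb₀B, ?_⟩, ⟨c, hcC, ?_⟩⟩ <;>
        · rw [Finsupp.mem_support_iff, hui]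
          simp [hw, Finsupp.single_apply, Finsupp.add_apply]
          try omega
    · exfalso
      have hii := hu0 i hui
      rw [hii] at hvsup
      have hcZ : c ∈ Z i₁ := hvsup (by
        rw [hv0, Finsupp.support_single_ne_zero _ one_ne_zero]
        exact Finset.mem_singleton_self c)
      exact (Finset.mem_sdiff.mp (hZ1 hcZ)).2 hcC
  have hFex : ∃ F : Fin n → Fin m, ∀ c ∈ C',
      u (F c) = Finsupp.single c 1 ∧ (Z (F c) ∩ A = ∅ ∨ Z (F c) ∩ B = ∅) := by
    choose F hF using hchoose
    refine ⟨fun c => if h : c ∈ C' then F c h else i₁, ?_⟩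
    intro c hc
    simp only [dif_pos hc]
    exact hF c hc
  obtain ⟨F, hFp⟩ := hFex
  have hF1 : ∀ c ∈ C', u (F c) = Finsupp.single c 1 := fun c hc => (hFp c hc).1
  have hF2 : ∀ c ∈ C', Z (F c) ∩ A = ∅ ∨ Z (F c) ∩ B = ∅ := fun c hc => (hFp c hc).2
  have hanti : ∀ c ∈ C', ∀ c' ∈ C', c ≠ c' → c' ∈ Z (F c) → c ∉ Z (F c') := by
    intro c hc c' hc' hne hmem hmem'
    have hFne : F c ≠ F c' := by
      intro he
      apply hne
      have h1 := hF1 c hc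
      have h2 := hF1 c' hc'
      rw [he, h2] at h1
      exact Finsupp.single_left_injective one_ne_zero h1.symm
    set e : Fin n →₀ ℕ := Finsupp.single c 1 + Finsupp.single c' 1 with he
    have hm1 : (monomial e 1 : MvPolynomial (Fin n) K) ∈ V (F c) := by
      have := hmemV (F c) (Finsupp.single c' 1) (by
        rw [Finsupp.support_single_ne_zero _ one_ne_zero]
        simpa using hmem)
      rwa [hF1 c hc] at this
    have hm2 : (monomial e 1 : MvPolynomial (Fin n) K) ∈ V (F c') := by
      have := hmemV (F c') (Finsupp.single c 1) (by
        rw [Finsupp.support_single_ne_zero _ one_ne_zero]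
        simpa using hmem')
      rw [hF1 c' hc', add_comm (Finsupp.single c' 1) (Finsupp.single c 1)] at this
      exact this
    have hd : Disjoint ((V (F c)).map mk') ((V (F c')).map mk') := hPD hFne
    have h0 : mk' (monomial e 1) = 0 :=
      Submodule.disjoint_def.mp hd _ (Submodule.mem_map_of_mem hm1)
        (Submodule.mem_map_of_mem hm2)
    exact (hmkne (F c) _ hm1).1 h0
  obtain ⟨c₀, hc₀, hcount⟩ := exists_small_outdeg C' (fun c => Z (F c)) hanti hC'ne
  set i₀ := F c₀ with hi₀
  have hkt : C'.card + (A ∩ B ∩ C).card = C.card := by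
    have h1 : (C \ (A ∩ B)).card + (C ∩ (A ∩ B)).card = C.card :=
      Finset.card_sdiff_add_card_inter C (A ∩ B)
    have h2 : C ∩ (A ∩ B) = A ∩ B ∩ C := by ext x; simp; tauto
    rw [h2] at h1
    exact h1
  have hZC' : 2 * (Z i₀ ∩ C').card ≤ C'.card + 1 := by
    have hsub : Z i₀ ∩ C' ⊆ insert c₀ ((Z i₀ ∩ C').erase c₀) := by
      intro x hx
      by_cases hxc : x = c₀
      · simp [hxc]
      · exact Finset.mem_insert_of_mem (Finset.mem_erase.mpr ⟨hxc, hx⟩)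
    have hle := Finset.card_le_card hsub
    have hins := Finset.card_insert_le c₀ ((Z i₀ ∩ C').erase c₀)
    have hk1 : 1 ≤ C'.card := Finset.card_pos.mpr hC'ne
    omega
  have hhalf : (Z i₀ ∩ C').card ≤ (C.card - (A ∩ B ∩ C).card + 1) / 2 := by
    rw [Nat.le_div_iff_mul_le (by norm_num)]
    omega
  have hbound : ∀ D : Finset (Fin n), A ∩ B ⊆ D → Z i₀ ∩ D = ∅ →
      (Z i₀).card ≤ (n - (D ∪ C).card) + (C.card - (A ∩ B ∩ C).card + 1) / 2 := by
    intro D hABD hD0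
    have hsub : Z i₀ ⊆ (Z i₀ \ (D ∪ C)) ∪ (Z i₀ ∩ C') := by
      intro x hx
      by_cases hxC : x ∈ C
      · apply Finset.mem_union_right
        refine Finset.mem_inter.mpr ⟨hx, Finset.mem_sdiff.mpr ⟨hxC, ?_⟩⟩
        intro hxAB
        have hxm : x ∈ Z i₀ ∩ D := Finset.mem_inter.mpr ⟨hx, hABD hxAB⟩
        rw [hD0] at hxm
        exact Finset.notMem_empty x hxm
      · apply Finset.mem_union_left
        refine Finset.mem_sdiff.mpr ⟨hx, ?_⟩
        intro hmem
        rcases Finset.mem_union.mp hmem with h | h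
        · have hxm : x ∈ Z i₀ ∩ D := Finset.mem_inter.mpr ⟨hx, h⟩
          rw [hD0] at hxm
          exact Finset.notMem_empty x hxm
        · exact hxC h
    have hcompl : (Z i₀ \ (D ∪ C)).card ≤ n - (D ∪ C).card := by
      have hsub2 : Z i₀ \ (D ∪ C) ⊆ (D ∪ C)ᶜ := by
        intro x hx
        rw [Finset.mem_compl]
        exact (Finset.mem_sdiff.mp hx).2
      have hle2 := Finset.card_le_card hsub2
      rwa [Finset.card_compl, Fintype.card_fin] at hle2
    calc (Z i₀).card ≤ (Z i₀ \ (D ∪ C)).card + (Z i₀ ∩ C').card :=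
          le_trans (Finset.card_le_card hsub) (Finset.card_union_le _ _)
    _ ≤ (n - (D ∪ C).card) + (C.card - (A ∩ B ∩ C).card + 1) / 2 := add_le_add hcompl hhalf
  have hfin : (Z i₀).card ≤ max (n - (B ∪ C).card) (n - (A ∪ C).card) +
      (C.card - (A ∩ B ∩ C).card + 1) / 2 := by
    rcases hF2 c₀ hc₀ with hA0 | hB0
    · exact le_trans (hbound A Finset.inter_subset_left hA0)
        (add_le_add_left (le_max_right _ _) _)
    · exact le_trans (hbound B Finset.inter_subset_right hB0)
        (add_le_add_left (le_max_left _ _) _)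
  exact le_trans (Finset.inf'_le _ (Finset.mem_univ i₀)) hfin
end

section
/- Let r ≤ e ≤ q be positive integers with r + e + q = n, let P_1 = (x_1,…,x_r), P_2 = (x_{r+1},…,x_{r+e}), P_3 = (x_{r+e+1},…,x_{r+e+q}) be prime ideals of S = K[x_1,…,x_n], and let I = P_1 ∩ P_2 ∩ P_3. Then sdepth_S(S/I) ≤ e + ⌈q/2⌉. -/
open MvPolynomial

namespace ThreePrimesAux





/-- The squarefree exponent vector supported on `V`. -/
def sq {n : ℕ} (V : Finset (Fin n)) : Fin n →₀ ℕ :=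
  ⟨V, fun j => if j ∈ V then 1 else 0, fun a => by by_cases h : a ∈ V <;> simp [h]⟩

@[simp] lemma sq_apply {n : ℕ} (V : Finset (Fin n)) (j : Fin n) :
    sq V j = if j ∈ V then 1 else 0 := rfl

@[simp] lemma sq_support {n : ℕ} (V : Finset (Fin n)) : (sq V).support = V := rfl

lemma sq_ne_zero_iff {n : ℕ} (V : Finset (Fin n)) (j : Fin n) :
    sq V j ≠ 0 ↔ j ∈ V := by by_cases h : j ∈ V <;> simp [h]

/-- The support of the monomial meets all three blocks. -/
def Bad (r e : ℕ) {n : ℕ} (b : Fin n →₀ ℕ) : Prop :=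
  (∃ j : Fin n, (j : ℕ) < r ∧ b j ≠ 0) ∧
    (∃ j : Fin n, r ≤ (j : ℕ) ∧ (j : ℕ) < r + e ∧ b j ≠ 0) ∧
    (∃ j : Fin n, r + e ≤ (j : ℕ) ∧ b j ≠ 0)

/-- Membership of `sq W` in the Stanley interval `i`, combinatorially. -/
def Triple {n : ℕ} {ι : Type} (u : ι → (Fin n →₀ ℕ)) (Z : ι → Finset (Fin n))
    (i : ι) (W : Finset (Fin n)) : Prop :=
  (∀ j, u i j ≠ 0 → j ∈ W) ∧ (∀ j, u i j ≤ 1) ∧ (∀ j ∈ W, u i j = 0 → j ∈ Z i)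

lemma triple_iff {n : ℕ} {ι : Type} (u : ι → (Fin n →₀ ℕ)) (Z : ι → Finset (Fin n))
    (i : ι) (W : Finset (Fin n)) :
    Triple u Z i W ↔
      ∃ v : Fin n →₀ ℕ, (v.support : Set (Fin n)) ⊆ (Z i : Set (Fin n)) ∧ sq W = u i + v := by
  classical
  constructor
  · rintro ⟨h1, h2, h3⟩
    refine ⟨sq (W.filter (fun j => u i j = 0)), ?_, ?_⟩
    · intro j hj
      simp only [Finset.coe_filter, sq_support, Set.mem_setOf_eq, Finset.mem_coe] at hj ⊢
      exact h3 j hj.1 hj.2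
    · ext j
      rw [Finsupp.add_apply]
      by_cases hw : j ∈ W
      · by_cases hu : u i j = 0
        · simp [hw, hu, Finset.mem_filter]
        · have h1' : u i j = 1 := by have := h2 j; omega
          simp [hw, hu, Finset.mem_filter, h1']
      · have hu : u i j = 0 := by
          by_contra h
          exact hw (h1 j h)
        have : j ∉ W.filter (fun j => u i j = 0) := fun h => hw (Finset.mem_filter.mp h).1
        simp [hw, hu, this]
  · rintro ⟨v, hv, hW⟩
    have happ : ∀ j, sq W j = u i j + v j := fun j => by rw [hW]; rfl
    refine ⟨?_, ?_, ?_⟩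
    · intro j hj
      by_contra hjW
      have := happ j
      simp [hjW] at this
      omega
    · intro j
      have := happ j
      by_cases hw : j ∈ W <;> simp [hw] at this <;> omega
    · intro j hjW hu
      have := happ j
      simp [hjW, hu] at this
      have hjv : j ∈ v.support := Finsupp.mem_support_iff.mpr (by omega)
      exact Finset.mem_coe.mp (hv hjv)

lemma two_mul_choose_two (m : ℕ) : 2 * m.choose 2 = m * (m - 1) := by
  induction m with
  | zero => rfl
  | succ k ih =>
    rw [Nat.choose_succ_succ, Nat.choose_one_right, Nat.mul_add, ih]
    cases k with
    | zero => rfl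
    | succ j => simp [Nat.succ_sub_one]; ring

lemma arith_contra {m q : ℕ} (h1 : 1 ≤ m) (hmq : m ≤ q)
    (h : m * ((q + 1) / 2) ≤ m.choose 2) : False := by
  have h2 : 2 * m.choose 2 = m * (m - 1) := two_mul_choose_two m
  have h3 : m * (2 * ((q + 1) / 2)) ≤ m * (m - 1) := by
    calc m * (2 * ((q + 1) / 2)) = 2 * (m * ((q + 1) / 2)) := by ring
    _ ≤ 2 * m.choose 2 := by omega
    _ = m * (m - 1) := h2
  have h4 : 2 * ((q + 1) / 2) ≤ m - 1 := Nat.le_of_mul_le_mul_left h3 (by omega)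
  omega

lemma card_filter_interval {n : ℕ} (a b : ℕ) (hab : a ≤ b) (hb : b ≤ n) :
    (Finset.univ.filter (fun j : Fin n => a ≤ (j : ℕ) ∧ (j : ℕ) < b)).card = b - a := by
  apply Finset.card_eq_of_bijective (fun i hi => (⟨a + i, by omega⟩ : Fin n))
  · intro x hx
    rw [Finset.mem_filter] at hx
    refine ⟨(x : ℕ) - a, by omega, ?_⟩
    ext
    simp
    omega
  · intro i hi
    rw [Finset.mem_filter]
    refine ⟨Finset.mem_univ _, by simp; omega⟩
  · intro i j hi hj hij
    have := congrArg Fin.val hij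
    simpa using this


lemma side_count {n : ℕ} {ι : Type} (u : ι → (Fin n →₀ ℕ)) (Z : ι → Finset (Fin n))
    (B1 Bx By : Finset (Fin n)) (c : ℕ)
    (h1x : ∀ j ∈ B1, j ∉ Bx) (hxy : ∀ j ∈ Bx, j ∉ By)
    (htri : ∀ j : Fin n, j ∈ B1 ∨ j ∈ Bx ∨ j ∈ By)
    (h1 : B1.Nonempty)
    (h1y : ∀ j ∈ B1, j ∉ By)
    (covS : ∀ W : Finset (Fin n), (∀ j ∈ W, j ∉ By) → ∃ i, Triple u Z i W)
    (avS : ∀ i W, Triple u Z i W →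
      (∀ j ∈ W, j ∉ B1) ∨ (∀ j ∈ W, j ∉ Bx) ∨ (∀ j ∈ W, j ∉ By))
    (unS : ∀ i j W, Triple u Z i W → Triple u Z j W → i = j)
    (i₀ : ι) (hi₀ : Triple u Z i₀ B1) (hZ₀ : ∀ j ∈ Z i₀, j ∉ Bx)
    (hcard : ∀ i, c + 1 ≤ ((Z i) \ B1).card) :
    Bx.card * c ≤ (Bx.card).choose 2 := by
  classical
  have hch : ∀ z : Fin n, ∃ i, z ∈ Bx → Triple u Z i (insert z B1) := by
    intro z
    by_cases hz : z ∈ Bx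
    · obtain ⟨i, hi⟩ := covS (insert z B1) (by
        intro j hj
        rcases Finset.mem_insert.mp hj with rfl | hj
        · exact hxy _ hz
        · exact h1y _ hj)
      exact ⟨i, fun _ => hi⟩
    · exact ⟨i₀, fun h => absurd h hz⟩
  choose f hf using hch
  have key1 : ∀ z ∈ Bx, u (f z) z ≠ 0 := by
    intro z hz h0
    have tz := hf z hz
    have t0 : Triple u Z (f z) B1 := by
      refine ⟨fun j hj => ?_, tz.2.1, fun j hj hj0 => tz.2.2 j (Finset.mem_insert_of_mem hj) hj0⟩
      rcases Finset.mem_insert.mp (tz.1 j hj) with rfl | h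
      · exact absurd h0 hj
      · exact h
    have hfz : f z = i₀ := unS _ _ _ t0 hi₀
    have hzZ : z ∈ Z i₀ := by
      have := tz.2.2 z (Finset.mem_insert_self _ _) h0
      rwa [hfz] at this
    exact hZ₀ z hzZ hz
  set C : Fin n → Finset (Fin n) := fun z => insert z ((Z (f z)) \ B1) with hC
  have hzC : ∀ z, z ∈ C z := fun z => Finset.mem_insert_self _ _
  have keytop : ∀ z ∈ Bx, Triple u Z (f z) (B1 ∪ C z) := by
    intro z hz
    have tz := hf z hz
    refine ⟨fun j hj => ?_, tz.2.1, fun j hj hj0 => ?_⟩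
    · rcases Finset.mem_insert.mp (tz.1 j hj) with rfl | h
      · exact Finset.mem_union_right _ (hzC _)
      · exact Finset.mem_union_left _ h
    · rcases Finset.mem_union.mp hj with h | h
      · exact tz.2.2 j (Finset.mem_insert_of_mem h) hj0
      · rcases Finset.mem_insert.mp h with rfl | h'
        · exact absurd hj0 (key1 _ hz)
        · exact (Finset.mem_sdiff.mp h').1
  have keyC : ∀ z ∈ Bx, C z ⊆ Bx := by
    intro z hz t ht
    rcases avS _ _ (keytop z hz) with h | h | h
    · obtain ⟨j, hj⟩ := h1
      exact absurd hj (h j (Finset.mem_union_left _ hj))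
    · exact absurd hz (h z (Finset.mem_union_right _ (hzC _)))
    · rcases Finset.mem_insert.mp ht with rfl | ht'
      · exact hz
      · have hnB1 := (Finset.mem_sdiff.mp ht').2
        rcases htri t with h1' | h2' | h3'
        · exact absurd h1' hnB1
        · exact h2'
        · exact absurd h3' (h t (Finset.mem_union_right _ ht))
  have keyPair : ∀ z ∈ Bx, ∀ t ∈ C z, t ≠ z → Triple u Z (f z) (insert t (insert z B1)) := by
    intro z hz t ht htz
    have tz := hf z hz
    refine ⟨fun j hj => Finset.mem_insert_of_mem (tz.1 j hj), tz.2.1, fun j hj hj0 => ?_⟩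
    rcases Finset.mem_insert.mp hj with rfl | hj'
    · rcases Finset.mem_insert.mp ht with h | h
      · exact absurd h htz
      · exact (Finset.mem_sdiff.mp h).1
    · exact tz.2.2 j hj' hj0
  have insert_eq_pair : ∀ a b : Fin n, insert a (insert b B1) = ({b, a} : Finset (Fin n)) ∪ B1 := by
    intro a b
    ext j
    simp [Finset.mem_insert, Finset.mem_union]
    tauto
  have keyInj : ∀ z ∈ Bx, ∀ z' ∈ Bx, ∀ t ∈ C z, ∀ t' ∈ C z', t ≠ z → t' ≠ z' →
      ({z, t} : Finset (Fin n)) = {z', t'} → z = z' := by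
    intro z hz z' hz' t ht t' ht' htz ht'z' hpair
    have hW : insert t (insert z B1) = insert t' (insert z' B1) := by
      rw [insert_eq_pair, insert_eq_pair, hpair]
    have hff : f z = f z' :=
      unS _ _ _ (keyPair z hz t ht htz) (hW ▸ keyPair z' hz' t' ht' ht'z')
    have hzmem := (hf z' hz').1 z (by rw [← hff]; exact key1 z hz)
    rcases Finset.mem_insert.mp hzmem with h | h
    · exact h
    · exact absurd hz (h1x z h)
  set S : Fin n → Finset (Finset (Fin n)) := fun z => ((C z).erase z).image (fun t => {z, t})
    with hS
  have hScard : ∀ z ∈ Bx, c ≤ (S z).card := by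
    intro z hz
    have hinj : Set.InjOn (fun t => ({z, t} : Finset (Fin n))) ((C z).erase z) := by
      intro a ha b hb hab
      have hab' : ({z, a} : Finset (Fin n)) = {z, b} := hab
      have : a ∈ ({z, b} : Finset (Fin n)) := by rw [← hab']; simp
      rcases Finset.mem_insert.mp this with h | h
      · exact absurd h (Finset.ne_of_mem_erase ha)
      · simpa using h
    have h2 : (Z (f z) \ B1).card ≤ (C z).card := Finset.card_le_card (Finset.subset_insert _ _)
    have h3 := hcard (f z)
    rw [hS]
    simp only []
    rw [Finset.card_image_of_injOn hinj, Finset.card_erase_of_mem (hzC z)]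
    omega
  have hSsub : ∀ z ∈ Bx, S z ⊆ Bx.powersetCard 2 := by
    intro z hz p hp
    obtain ⟨t, ht, rfl⟩ := Finset.mem_image.mp hp
    rw [Finset.mem_powersetCard]
    refine ⟨?_, Finset.card_pair (Ne.symm (Finset.ne_of_mem_erase ht))⟩
    intro j hj
    rcases Finset.mem_insert.mp hj with rfl | hj'
    · exact hz
    · have hjt : j = t := by simpa using hj'
      exact hjt ▸ keyC z hz (Finset.mem_of_mem_erase ht)
  have hdisj : ∀ z ∈ Bx, ∀ z' ∈ Bx, z ≠ z' → Disjoint (S z) (S z') := by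
    intro z hz z' hz' hne
    rw [Finset.disjoint_left]
    intro p hp hp'
    obtain ⟨t, ht, rfl⟩ := Finset.mem_image.mp hp
    obtain ⟨t', ht', hpair⟩ := Finset.mem_image.mp hp'
    exact hne (keyInj z hz z' hz' t (Finset.mem_of_mem_erase ht) t' (Finset.mem_of_mem_erase ht')
      (Finset.ne_of_mem_erase ht) (Finset.ne_of_mem_erase ht') hpair.symm)
  calc Bx.card * c ≤ ∑ z ∈ Bx, (S z).card := by
        simpa [smul_eq_mul] using Finset.card_nsmul_le_sum Bx _ c hScard
    _ = (Bx.biUnion S).card := (Finset.card_biUnion hdisj).symm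
    _ ≤ (Bx.powersetCard 2).card := Finset.card_le_card (Finset.biUnion_subset.mpr hSsub)
    _ = (Bx.card).choose 2 := Finset.card_powersetCard 2 Bx


lemma main_comb {n r e q : ℕ} {ι : Type} (u : ι → (Fin n →₀ ℕ)) (Z : ι → Finset (Fin n))
    {d : ℕ}
    (hr : 0 < r) (hre : r ≤ e) (heq : e ≤ q) (hn : r + e + q = n)
    (cover : ∀ b : Fin n →₀ ℕ, ¬Bad r e b →
      ∃ i, ∃ v : Fin n →₀ ℕ, (v.support : Set (Fin n)) ⊆ (Z i : Set (Fin n)) ∧ b = u i + v)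
    (avoid : ∀ i, ∀ v : Fin n →₀ ℕ, (v.support : Set (Fin n)) ⊆ (Z i : Set (Fin n)) →
      ¬Bad r e (u i + v))
    (uniq : ∀ i j (b : Fin n →₀ ℕ),
      (∃ v : Fin n →₀ ℕ, (v.support : Set (Fin n)) ⊆ (Z i : Set (Fin n)) ∧ b = u i + v) →
      (∃ v : Fin n →₀ ℕ, (v.support : Set (Fin n)) ⊆ (Z j : Set (Fin n)) ∧ b = u j + v) →
      i = j)
    (hd : ∀ i, d ≤ (Z i).card) :
    d ≤ e + (q + 1) / 2 := by
  classical
  by_contra hcon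
  push_neg at hcon
  set B1 : Finset (Fin n) := Finset.univ.filter (fun j => (j : ℕ) < r) with hB1
  set B2 : Finset (Fin n) := Finset.univ.filter (fun j => r ≤ (j : ℕ) ∧ (j : ℕ) < r + e) with hB2
  set B3 : Finset (Fin n) := Finset.univ.filter (fun j => r + e ≤ (j : ℕ)) with hB3
  have mem1 : ∀ j : Fin n, j ∈ B1 ↔ (j : ℕ) < r := by intro j; simp [hB1]
  have mem2 : ∀ j : Fin n, j ∈ B2 ↔ (r ≤ (j : ℕ) ∧ (j : ℕ) < r + e) := by intro j; simp [hB2]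
  have mem3 : ∀ j : Fin n, j ∈ B3 ↔ r + e ≤ (j : ℕ) := by intro j; simp [hB3]
  have card1 : B1.card = r := by
    have hEq : B1 = Finset.univ.filter (fun j : Fin n => 0 ≤ (j : ℕ) ∧ (j : ℕ) < r) := by
      ext j; simp [hB1]
    rw [hEq, card_filter_interval 0 r (by omega) (by omega)]; omega
  have card2 : B2.card = e := by
    rw [hB2, card_filter_interval r (r + e) (by omega) (by omega)]; omega
  have card3 : B3.card = q := by
    have hEq : B3 = Finset.univ.filter (fun j : Fin n => r + e ≤ (j : ℕ) ∧ (j : ℕ) < n) := by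
      ext j; simp [hB3, j.isLt]
    rw [hEq, card_filter_interval (r + e) n (by omega) (by omega)]; omega
  have htri : ∀ j : Fin n, j ∈ B1 ∨ j ∈ B2 ∨ j ∈ B3 := by
    intro j
    rw [mem1, mem2, mem3]
    omega
  have h12 : ∀ j ∈ B1, j ∉ B2 := by
    intro j hj hj2; rw [mem1] at hj; rw [mem2] at hj2; omega
  have h13 : ∀ j ∈ B1, j ∉ B3 := by
    intro j hj hj2; rw [mem1] at hj; rw [mem3] at hj2; omega
  have h23 : ∀ j ∈ B2, j ∉ B3 := by
    intro j hj hj2; rw [mem2] at hj; rw [mem3] at hj2; omega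
  have h32 : ∀ j ∈ B3, j ∉ B2 := by
    intro j hj hj2; rw [mem3] at hj; rw [mem2] at hj2; omega
  -- Triple-level interface
  have covS : ∀ W : Finset (Fin n),
      ((∀ j ∈ W, j ∉ B1) ∨ (∀ j ∈ W, j ∉ B2) ∨ (∀ j ∈ W, j ∉ B3)) → ∃ i, Triple u Z i W := by
    intro W hmiss
    have hnb : ¬Bad r e (sq W) := by
      rintro ⟨⟨j1, hj1, hj1'⟩, ⟨j2, hj2, hj2', hj2''⟩, ⟨j3, hj3, hj3'⟩⟩
      rw [sq_ne_zero_iff] at hj1' hj2'' hj3'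
      rcases hmiss with h | h | h
      · exact h j1 hj1' ((mem1 j1).mpr hj1)
      · exact h j2 hj2'' ((mem2 j2).mpr ⟨hj2, hj2'⟩)
      · exact h j3 hj3' ((mem3 j3).mpr hj3)
    obtain ⟨i, v, hv, hW⟩ := cover (sq W) hnb
    exact ⟨i, (triple_iff u Z i W).mpr ⟨v, hv, hW⟩⟩
  have avS : ∀ i W, Triple u Z i W →
      (∀ j ∈ W, j ∉ B1) ∨ (∀ j ∈ W, j ∉ B2) ∨ (∀ j ∈ W, j ∉ B3) := by
    intro i W ht
    obtain ⟨v, hv, hW⟩ := (triple_iff u Z i W).mp ht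
    have hnb : ¬Bad r e (sq W) := by rw [hW]; exact avoid i v hv
    by_contra hcon'
    push_neg at hcon'
    obtain ⟨⟨j1, hj1, hj1'⟩, ⟨j2, hj2, hj2'⟩, ⟨j3, hj3, hj3'⟩⟩ := hcon'
    refine hnb ⟨⟨j1, (mem1 j1).mp hj1', (sq_ne_zero_iff W j1).mpr hj1⟩,
      ⟨j2, ((mem2 j2).mp hj2').1, ((mem2 j2).mp hj2').2, (sq_ne_zero_iff W j2).mpr hj2⟩,
      ⟨j3, (mem3 j3).mp hj3', (sq_ne_zero_iff W j3).mpr hj3⟩⟩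
  have unS : ∀ i j W, Triple u Z i W → Triple u Z j W → i = j := by
    intro i j W t1 t2
    exact uniq i j (sq W) ((triple_iff u Z i W).mp t1) ((triple_iff u Z j W).mp t2)
  -- the interval of ∅ (i.e. of the monomial x^{B1})
  obtain ⟨i₀, hi₀⟩ := covS B1 (Or.inr (Or.inl h12))
  have htop₀ : Triple u Z i₀ (B1 ∪ (Z i₀ \ B1)) := by
    obtain ⟨h1', h2', h3'⟩ := hi₀
    refine ⟨fun j hj => Finset.mem_union_left _ (h1' j hj), h2', fun j hj hj0 => ?_⟩
    rcases Finset.mem_union.mp hj with h | h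
    · exact h3' j h hj0
    · exact (Finset.mem_sdiff.mp h).1
  have hB1ne : B1.Nonempty := ⟨⟨0, by omega⟩, (mem1 _).mpr hr⟩
  have hcard : ∀ i, (q + 1) / 2 + 1 ≤ ((Z i) \ B1).card := by
    intro i
    have h2 := Finset.card_le_card_sdiff_add_card (s := Z i) (t := B1)
    have h3 := hd i
    rw [card1] at h2
    omega
  rcases avS i₀ _ htop₀ with hmiss | hmiss | hmiss
  · obtain ⟨j, hj⟩ := hB1ne
    exact hmiss j (Finset.mem_union_left _ hj) hj
  · -- Z i₀ misses B2 : count on B2, excluded side B3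
    have hZ₀ : ∀ j ∈ Z i₀, j ∉ B2 := by
      intro j hj hj2
      by_cases hb1 : j ∈ B1
      · exact h12 j hb1 hj2
      · exact hmiss j (Finset.mem_union_right _ (Finset.mem_sdiff.mpr ⟨hj, hb1⟩)) hj2
    have hcount := side_count u Z B1 B2 B3 ((q + 1) / 2) h12 h23 htri hB1ne h13
      (fun W h => covS W (Or.inr (Or.inr h))) avS unS i₀ hi₀ hZ₀ hcard
    rw [card2] at hcount
    exact absurd hcount (fun h => arith_contra (by omega) heq h)
  · -- Z i₀ misses B3 : count on B3, excluded side B2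
    have hZ₀ : ∀ j ∈ Z i₀, j ∉ B3 := by
      intro j hj hj2
      by_cases hb1 : j ∈ B1
      · exact h13 j hb1 hj2
      · exact hmiss j (Finset.mem_union_right _ (Finset.mem_sdiff.mpr ⟨hj, hb1⟩)) hj2
    have hcount := side_count u Z B1 B3 B2 ((q + 1) / 2) h13 h32
      (fun j => (htri j).imp id Or.symm) hB1ne h12
      (fun W h => covS W (Or.inr (Or.inl h)))
      (fun i W ht => ((avS i W ht).imp id Or.symm)) unS i₀ hi₀ hZ₀ hcard
    rw [card3] at hcount
    exact absurd hcount (fun h => arith_contra (by omega) (le_refl q) h)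


/-- Polynomials all of whose monomials lie in `s`, as a `K`-submodule. -/
def suppIn (K : Type*) [Field K] {n : ℕ} (s : Set (Fin n →₀ ℕ)) :
    Submodule K (MvPolynomial (Fin n) K) where
  carrier := {p | ∀ a ∈ p.support, a ∈ s}
  add_mem' := by
    intro p q hp hq a ha
    rcases Finset.mem_union.mp (MvPolynomial.support_add ha) with h | h
    · exact hp a h
    · exact hq a h
  zero_mem' := by intro a ha; simp at ha
  smul_mem' := by
    intro cc p hp a ha
    exact hp a (MvPolynomial.support_smul ha)


end ThreePrimesAux

/-- **Corollary 2.2.** For `I = P_1 ∩ P_2 ∩ P_3` with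
`P_1 = (x_1,…,x_r)`, `P_2 = (x_{r+1},…,x_{r+e})`, `P_3 = (x_{r+e+1},…,x_{r+e+q})`,
`r ≤ e ≤ q`, `r + e + q = n`, one has `sdepth S/I ≤ e + ⌈q/2⌉`. -/
theorem sdepth_quot_le_three_disjoint_primes {K : Type*} [Field K] {r e q n : ℕ}
    (hr : 0 < r) (hre : r ≤ e) (heq : e ≤ q) (hn : r + e + q = n)
    (P₁ P₂ P₃ I : Ideal (MvPolynomial (Fin n) K))
    (hP₁ : P₁ = Ideal.span
      ((fun j => (X j : MvPolynomial (Fin n) K)) '' {i : Fin n | (i : ℕ) < r}))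
    (hP₂ : P₂ = Ideal.span
      ((fun j => (X j : MvPolynomial (Fin n) K)) '' {i : Fin n | r ≤ (i : ℕ) ∧ (i : ℕ) < r + e}))
    (hP₃ : P₃ = Ideal.span
      ((fun j => (X j : MvPolynomial (Fin n) K)) '' {i : Fin n | r + e ≤ (i : ℕ)}))
    (hI : I = P₁ ⊓ P₂ ⊓ P₃) :
    sdepthQuot I ≤ e + (q + 1) / 2 := by
  classical
  refine csSup_le' ?_
  rintro d ⟨ι, _inst, _ne, u, Z, ⟨hdis, hind, hsup⟩, hZd⟩
  -- membership characterization of I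
  have memI : ∀ p : MvPolynomial (Fin n) K, p ∈ I ↔ ∀ a ∈ p.support, ThreePrimesAux.Bad r e a := by
    intro p
    rw [hI, Submodule.mem_inf, Submodule.mem_inf, hP₁, hP₂, hP₃]
    constructor
    · rintro ⟨⟨h1, h2⟩, h3⟩ a ha
      refine ⟨?_, ?_, ?_⟩
      · obtain ⟨i, hi, hi'⟩ := mem_ideal_span_X_image.mp h1 a ha
        exact ⟨i, hi, hi'⟩
      · obtain ⟨i, hi, hi'⟩ := mem_ideal_span_X_image.mp h2 a ha
        exact ⟨i, hi.1, hi.2, hi'⟩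
      · obtain ⟨i, hi, hi'⟩ := mem_ideal_span_X_image.mp h3 a ha
        exact ⟨i, hi, hi'⟩
    · intro h
      refine ⟨⟨mem_ideal_span_X_image.mpr ?_, mem_ideal_span_X_image.mpr ?_⟩,
        mem_ideal_span_X_image.mpr ?_⟩
      · intro m hm
        obtain ⟨j, hj, hj'⟩ := (h m hm).1
        exact ⟨j, hj, hj'⟩
      · intro m hm
        obtain ⟨j, hj, hj', hj''⟩ := (h m hm).2.1
        exact ⟨j, ⟨hj, hj'⟩, hj''⟩
      · intro m hm
        obtain ⟨j, hj, hj'⟩ := (h m hm).2.2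
        exact ⟨j, hj, hj'⟩
  have monI : ∀ b : Fin n →₀ ℕ, (monomial b (1 : K)) ∈ I ↔ ThreePrimesAux.Bad r e b := by
    intro b
    rw [memI]
    constructor
    · intro h
      exact h b (by rw [mem_support_iff, coeff_monomial]; simp)
    · intro h a ha
      have hab : a = b := by simpa using support_monomial_subset ha
      exact hab ▸ h
  have memS : ∀ i (b : Fin n →₀ ℕ),
      (∃ v : Fin n →₀ ℕ, (v.support : Set (Fin n)) ⊆ (Z i : Set (Fin n)) ∧ b = u i + v) →
      (monomial b (1 : K)) ∈ stanleySpace K (u i) (Z i) := by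
    rintro i b ⟨v, hv, rfl⟩
    exact Submodule.subset_span ⟨v, hv, rfl⟩
  have S_le : ∀ i, stanleySpace K (u i) (Z i) ≤
      ThreePrimesAux.suppIn K
        {a | ∃ v : Fin n →₀ ℕ, (v.support : Set (Fin n)) ⊆ (Z i : Set (Fin n)) ∧ a = u i + v} := by
    intro i
    rw [stanleySpace, Submodule.span_le]
    rintro _ ⟨v, hv, rfl⟩ a ha
    have hab : a = u i + v := by simpa using support_monomial_subset ha
    exact ⟨v, hv, hab⟩
  have avoid : ∀ i, ∀ v : Fin n →₀ ℕ, (v.support : Set (Fin n)) ⊆ (Z i : Set (Fin n)) →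
      ¬ThreePrimesAux.Bad r e (u i + v) := by
    intro i v hv hbad
    have h1 : (monomial (u i + v) (1 : K)) ∈ stanleySpace K (u i) (Z i) :=
      Submodule.subset_span ⟨v, hv, rfl⟩
    have h2 : (monomial (u i + v) (1 : K)) ∈ Submodule.restrictScalars K I :=
      (Submodule.restrictScalars_mem _ _ _).mpr ((monI _).mpr hbad)
    have h0 : (monomial (u i + v) (1 : K)) = 0 := Submodule.disjoint_def.mp (hdis i) _ h1 h2
    exact one_ne_zero (monomial_eq_zero.mp h0)
  set π := (Ideal.Quotient.mkₐ K I).toLinearMap with hπ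
  have πapp : ∀ p : MvPolynomial (Fin n) K, π p = Ideal.Quotient.mk I p := by
    intro p
    simp [hπ, Ideal.Quotient.mkₐ_eq_mk]
  have cover : ∀ b : Fin n →₀ ℕ, ¬ThreePrimesAux.Bad r e b →
      ∃ i, ∃ v : Fin n →₀ ℕ, (v.support : Set (Fin n)) ⊆ (Z i : Set (Fin n)) ∧ b = u i + v := by
    intro b hbad
    have h1 : π (monomial b (1 : K)) ∈
        Submodule.map π (⨆ i, stanleySpace K (u i) (Z i)) := by
      rw [Submodule.map_iSup, hsup]
      trivial
    obtain ⟨w, hw, hwe⟩ := h1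
    have hwI : w - monomial b 1 ∈ I := by
      have h0 : π (w - monomial b 1) = 0 := by rw [map_sub, hwe, sub_self]
      rw [πapp] at h0
      exact (Ideal.Quotient.eq_zero_iff_mem).mp h0
    have hcw : coeff b w = 1 := by
      have h0 : coeff b (w - monomial b 1) = 0 := by
        rw [← notMem_support_iff]
        intro hmem
        exact hbad ((memI _).mp hwI b hmem)
      rw [coeff_sub, sub_eq_zero, coeff_monomial] at h0
      simpa using h0
    have hbw : b ∈ w.support := mem_support_iff.mpr (by rw [hcw]; exact one_ne_zero)
    have hWle : (⨆ i, stanleySpace K (u i) (Z i)) ≤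
        ThreePrimesAux.suppIn K (⋃ i, {a | ∃ v : Fin n →₀ ℕ,
          (v.support : Set (Fin n)) ⊆ (Z i : Set (Fin n)) ∧ a = u i + v}) := by
      refine iSup_le fun i => le_trans (S_le i) ?_
      intro p hp a ha
      exact Set.mem_iUnion.mpr ⟨i, hp a ha⟩
    rcases Set.mem_iUnion.mp (hWle hw b hbw) with ⟨i, hv⟩
    exact ⟨i, hv⟩
  have uniq : ∀ i j (b : Fin n →₀ ℕ),
      (∃ v : Fin n →₀ ℕ, (v.support : Set (Fin n)) ⊆ (Z i : Set (Fin n)) ∧ b = u i + v) →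
      (∃ v : Fin n →₀ ℕ, (v.support : Set (Fin n)) ⊆ (Z j : Set (Fin n)) ∧ b = u j + v) →
      i = j := by
    intro i j b hbi hbj
    by_contra hne
    have hbad : ¬ThreePrimesAux.Bad r e b := by
      obtain ⟨v, hv, hb⟩ := hbi
      rw [hb]
      exact avoid i v hv
    have h1 : π (monomial b (1 : K)) ∈ Submodule.map π (stanleySpace K (u i) (Z i)) :=
      Submodule.mem_map_of_mem (memS i b hbi)
    have h2 : π (monomial b (1 : K)) ∈
        ⨆ (k) (_ : k ≠ i), Submodule.map π (stanleySpace K (u k) (Z k)) := by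
      have hle := le_iSup₂ (f := fun (k : ι) (_ : k ≠ i) =>
        Submodule.map π (stanleySpace K (u k) (Z k))) j (Ne.symm hne)
      exact hle (Submodule.mem_map_of_mem (memS j b hbj))
    have h0 := Submodule.disjoint_def.mp (hind i) _ h1 h2
    rw [πapp] at h0
    exact hbad ((monI b).mp ((Ideal.Quotient.eq_zero_iff_mem).mp h0))
  exact ThreePrimesAux.main_comb u Z hr hre heq hn cover avoid uniq hZd
end

section
/- Let r ≤ e ≤ q be positive integers with r + e + q = n, let P_1 = (x_1,…,x_r), P_2 = (x_{r+1},…,x_{r+e}), P_3 = (x_{r+e+1},…,x_{r+e+q}) be prime ideals of S = K[x_1,…,x_n], and let I = P_1 ∩ P_2 ∩ P_3. If it is not the case that e = r + 1 and r is odd, then sdepth_S(S/I) ≤ r + min{ e, ⌈q/2⌉ }. -/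
open MvPolynomial

/-- Auxiliary: the exponent `a` gives a monomial lying in `P₁ ⊓ P₂ ⊓ P₃`. -/
def Mem3 (r e : ℕ) {n : ℕ} (a : Fin n →₀ ℕ) : Prop :=
  (∃ j : Fin n, (j : ℕ) < r ∧ a j ≠ 0) ∧
    (∃ j : Fin n, r ≤ (j : ℕ) ∧ (j : ℕ) < r + e ∧ a j ≠ 0) ∧
    (∃ j : Fin n, r + e ≤ (j : ℕ) ∧ a j ≠ 0)

/-- Indicator finsupp of a finset. -/
def ind {n : ℕ} (s : Finset (Fin n)) : Fin n →₀ ℕ :=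
  ⟨s, fun j => if j ∈ s then 1 else 0, fun j => by by_cases h : j ∈ s <;> simp [h]⟩

lemma ind_apply {n : ℕ} (s : Finset (Fin n)) (j : Fin n) :
    ind s j = if j ∈ s then 1 else 0 := rfl

lemma card_filter_lt {n : ℕ} (m : ℕ) (h : m ≤ n) :
    (Finset.univ.filter fun j : Fin n => (j : ℕ) < m).card = m := by
  have heq : (Finset.univ.filter fun j : Fin n => (j : ℕ) < m)
      = Finset.univ.map ⟨Fin.castLE h, Fin.castLE_injective h⟩ := by
    ext j
    simp only [Finset.mem_filter, Finset.mem_univ, true_and, Finset.mem_map,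
      Function.Embedding.coeFn_mk]
    constructor
    · intro hj
      exact ⟨⟨(j : ℕ), hj⟩, by ext; simp⟩
    · rintro ⟨k, rfl⟩
      simpa using k.isLt
  rw [heq, Finset.card_map, Finset.card_univ, Fintype.card_fin]

lemma card_filter_mid {n : ℕ} (r e : ℕ) (h : r + e ≤ n) :
    (Finset.univ.filter fun j : Fin n => r ≤ (j : ℕ) ∧ (j : ℕ) < r + e).card = e := by
  classical
  have h1 := Finset.card_filter_add_card_filter_not
    (s := Finset.univ.filter fun j : Fin n => (j : ℕ) < r + e) (p := fun j => (j : ℕ) < r)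
  have e1 : ((Finset.univ.filter fun j : Fin n => (j : ℕ) < r + e).filter
      fun j : Fin n => (j : ℕ) < r) = (Finset.univ.filter fun j : Fin n => (j : ℕ) < r) := by
    ext j; simp only [Finset.mem_filter, Finset.mem_univ, true_and]; omega
  have e2 : ((Finset.univ.filter fun j : Fin n => (j : ℕ) < r + e).filter
      fun j : Fin n => ¬ (j : ℕ) < r)
      = (Finset.univ.filter fun j : Fin n => r ≤ (j : ℕ) ∧ (j : ℕ) < r + e) := by
    ext j; simp only [Finset.mem_filter, Finset.mem_univ, true_and]; omega
  rw [e1, e2, card_filter_lt _ h, card_filter_lt _ (le_trans (Nat.le_add_right r e) h)] at h1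
  omega

lemma card_filter_ge {n : ℕ} (m : ℕ) (h : m ≤ n) :
    (Finset.univ.filter fun j : Fin n => m ≤ (j : ℕ)).card = n - m := by
  classical
  have h1 := Finset.card_filter_add_card_filter_not
    (s := (Finset.univ : Finset (Fin n))) (p := fun j : Fin n => (j : ℕ) < m)
  have e2 : (Finset.univ.filter fun j : Fin n => ¬ (j : ℕ) < m)
      = (Finset.univ.filter fun j : Fin n => m ≤ (j : ℕ)) := by
    ext j; simp only [Finset.mem_filter, Finset.mem_univ, true_and]; omega
  rw [e2, card_filter_lt _ h, Finset.card_univ, Fintype.card_fin] at h1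
  omega

lemma count_contra {n q t : ℕ} {ι : Type}
    (Z : ι → Finset (Fin n)) (ix : Fin n → ι) (s : Finset (Fin n))
    (hs0 : 0 < s.card) (hsq : s.card ≤ q) (hq2t : q ≤ 2 * t)
    (hcnt : ∀ x ∈ s, t ≤ ((Z (ix x)).filter fun j => j ∈ s ∧ j ≠ x).card)
    (hanti : ∀ x ∈ s, ∀ y ∈ s, y ≠ x → y ∈ Z (ix x) → x ∈ Z (ix y) → False) :
    False := by
  classical
  have hdisj : ∀ x ∈ s, ∀ y ∈ s, x ≠ y →
      Disjoint (((Z (ix x)).filter fun j => j ∈ s ∧ j ≠ x).image fun y' => (x, y'))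
        (((Z (ix y)).filter fun j => j ∈ s ∧ j ≠ y).image fun y' => (y, y')) := by
    intro x hx y hy hxy
    rw [Finset.disjoint_left]
    rintro p hp1 hp2
    simp only [Finset.mem_image] at hp1 hp2
    obtain ⟨a, _, rfl⟩ := hp1
    obtain ⟨b, _, hba⟩ := hp2
    exact hxy ((congrArg Prod.fst hba).symm)
  have hPcard : s.card * t ≤
      (s.biUnion fun x => ((Z (ix x)).filter fun j => j ∈ s ∧ j ≠ x).image
        fun y => (x, y)).card := by
    rw [Finset.card_biUnion hdisj]
    calc s.card * t = ∑ _x ∈ s, t := by rw [Finset.sum_const, smul_eq_mul]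
      _ ≤ _ := Finset.sum_le_sum fun x hx => le_trans (hcnt x hx)
          (le_of_eq (Finset.card_image_of_injective _ fun a b hab => by
            simpa using congrArg Prod.snd hab).symm)
  have hmemP : ∀ p : Fin n × Fin n,
      p ∈ (s.biUnion fun x => ((Z (ix x)).filter fun j => j ∈ s ∧ j ≠ x).image
        fun y => (x, y)) →
      p.1 ∈ s ∧ p.2 ∈ s ∧ p.2 ≠ p.1 ∧ p.2 ∈ Z (ix p.1) := by
    intro p hp
    simp only [Finset.mem_biUnion, Finset.mem_image, Finset.mem_filter] at hp
    obtain ⟨x, hx, y, ⟨hyZ, hys, hyx⟩, rfl⟩ := hp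
    exact ⟨hx, hys, hyx, hyZ⟩
  have hPle : (s.biUnion fun x => ((Z (ix x)).filter fun j => j ∈ s ∧ j ≠ x).image
      fun y => (x, y)).card ≤ (s.powersetCard 2).card := by
    apply Finset.card_le_card_of_injOn (fun p => ({p.1, p.2} : Finset (Fin n)))
    · intro p hp
      obtain ⟨h1, h2, h3, _⟩ := hmemP p hp
      rw [Finset.mem_coe, Finset.mem_powersetCard]
      constructor
      · intro z hz
        rcases Finset.mem_insert.mp hz with rfl | hz'
        · exact h1
        · rw [Finset.mem_singleton.mp hz']; exact h2
      · exact Finset.card_pair (Ne.symm h3)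
    · intro p hp p' hp' hee0
      have hee : ({p.1, p.2} : Finset (Fin n)) = {p'.1, p'.2} := hee0
      obtain ⟨h1, h2, h3, h4⟩ := hmemP p (Finset.mem_coe.mp hp)
      obtain ⟨h1', h2', h3', h4'⟩ := hmemP p' (Finset.mem_coe.mp hp')
      have hm1 : p'.1 ∈ ({p.1, p.2} : Finset (Fin n)) := by rw [hee]; simp
      have hm2 : p'.2 ∈ ({p.1, p.2} : Finset (Fin n)) := by rw [hee]; simp
      have hm3 : p.1 ∈ ({p'.1, p'.2} : Finset (Fin n)) := by rw [← hee]; simp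
      simp only [Finset.mem_insert, Finset.mem_singleton] at hm1 hm2 hm3
      rcases hm1 with h11 | h12
      · rcases hm2 with h21 | h22
        · exact absurd (h21.trans h11.symm) h3'
        · exact Prod.ext h11.symm h22.symm
      · rcases hm3 with h31 | h32
        · exact absurd (h31.trans h12) (Ne.symm h3)
        · exfalso
          apply hanti p.1 h1 p.2 h2 h3 h4
          rw [h32, ← h12]
          exact h4'
  have h2 : s.card * t ≤ s.card.choose 2 := by
    have h := hPcard.trans hPle
    rwa [Finset.card_powersetCard] at h
  rw [Nat.choose_two_right] at h2
  have hA := Nat.mul_le_mul_left 2 h2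
  have hC : s.card * (2 * t) ≤ s.card * (s.card - 1) := by
    have hB : 2 * (s.card * (s.card - 1) / 2) ≤ s.card * (s.card - 1) := by omega
    calc s.card * (2 * t) = 2 * (s.card * t) := by ring
      _ ≤ 2 * (s.card * (s.card - 1) / 2) := hA
      _ ≤ s.card * (s.card - 1) := hB
  have hfin := Nat.le_of_mul_le_mul_left hC hs0
  omega

lemma main_case {n r e q t d : ℕ} {ι : Type} [Nonempty ι]
    (u : ι → (Fin n →₀ ℕ)) (Z : ι → Finset (Fin n))
    (hcard : ∀ i, d ≤ (Z i).card) (hd : r + t + 1 ≤ d) (hq2t : q ≤ 2 * t)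
    (cardR : (Finset.univ.filter fun j : Fin n => (j : ℕ) < r).card = r)
    (cover : ∀ a : Fin n →₀ ℕ, ¬ Mem3 r e a →
      ∃ i v, a = u i + v ∧ ∀ j, v j ≠ 0 → j ∈ Z i)
    (uniq : ∀ a : Fin n →₀ ℕ, ¬ Mem3 r e a → ∀ i v i' v',
      a = u i + v → (∀ j, v j ≠ 0 → j ∈ Z i) →
      a = u i' + v' → (∀ j, v' j ≠ 0 → j ∈ Z i') → i = i')
    (aR : Fin n →₀ ℕ) (haRval : ∀ j : Fin n, aR j = if (j : ℕ) < r then 1 else 0)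
    (haRI : ¬ Mem3 r e aR)
    (i₀ : ι) (v₀ : Fin n →₀ ℕ) (h₀ : aR = u i₀ + v₀)
    (hv₀ : ∀ j, v₀ j ≠ 0 → j ∈ Z i₀)
    (s : Finset (Fin n)) (hs0 : 0 < s.card) (hsq : s.card ≤ q)
    (hsR : ∀ x ∈ s, ¬ ((x : ℕ) < r))
    (hZ0 : ∀ j ∈ Z i₀, j ∉ s)
    (hAx : ∀ x ∈ s, ¬ Mem3 r e (aR + Finsupp.single x 1))
    (hAxy : ∀ x ∈ s, ∀ y ∈ s, y ≠ x →
      ¬ Mem3 r e (aR + Finsupp.single x 1 + Finsupp.single y 1))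
    (hZs : ∀ x ∈ s, ∀ i : ι,
      (∃ v, aR + Finsupp.single x 1 = u i + v ∧ ∀ j, v j ≠ 0 → j ∈ Z i) →
      ∀ j ∈ Z i, (j : ℕ) < r ∨ j ∈ s) :
    False := by
  classical
  have H : ∀ x : Fin n, ∃ p : ι × (Fin n →₀ ℕ), x ∈ s →
      (aR + Finsupp.single x 1 = u p.1 + p.2 ∧ ∀ j, p.2 j ≠ 0 → j ∈ Z p.1) := by
    intro x
    by_cases hx : x ∈ s
    · obtain ⟨i, v, h1, h2⟩ := cover _ (hAx x hx)
      exact ⟨(i, v), fun _ => ⟨h1, h2⟩⟩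
    · exact ⟨(Classical.arbitrary ι, 0), fun h => absurd h hx⟩
  choose p hp using H
  have hx1 : ∀ x ∈ s, aR + Finsupp.single x 1 = u (p x).1 + (p x).2 :=
    fun x hx => (hp x hx).1
  have hx2 : ∀ x ∈ s, ∀ j, (p x).2 j ≠ 0 → j ∈ Z (p x).1 :=
    fun x hx => (hp x hx).2
  have hvx1 : ∀ x ∈ s, u (p x).1 x + (p x).2 x = 1 := by
    intro x hx
    have hpt := (DFunLike.congr_fun (hx1 x hx) x).symm
    rw [Finsupp.add_apply, Finsupp.add_apply, haRval, if_neg (hsR x hx),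
      Finsupp.single_eq_same, zero_add] at hpt
    exact hpt
  have c1 : ∀ x ∈ s, u (p x).1 x ≠ 0 := by
    intro x hx hux
    have hpt := hvx1 x hx
    rw [hux, zero_add] at hpt
    set v' : Fin n →₀ ℕ := (p x).2 - Finsupp.single x 1 with hv'
    have hv'app : ∀ j, v' j = (p x).2 j - (Finsupp.single x 1) j :=
      fun j => Finsupp.tsub_apply _ _ j
    have haRdec : aR = u (p x).1 + v' := by
      ext j
      have hj := DFunLike.congr_fun (hx1 x hx) j
      rw [Finsupp.add_apply, Finsupp.add_apply] at hj
      rw [Finsupp.add_apply, hv'app j]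
      by_cases hjx : j = x
      · subst hjx
        have h1 : aR j = 0 := by rw [haRval, if_neg (hsR j hx)]
        have h2 : Finsupp.single j (1 : ℕ) j = 1 := Finsupp.single_eq_same
        omega
      · have h2 : Finsupp.single x (1 : ℕ) j = 0 := Finsupp.single_eq_of_ne' (Ne.symm hjx)
        omega
    have hv'mem : ∀ j, v' j ≠ 0 → j ∈ Z (p x).1 := by
      intro j hj
      apply hx2 x hx j
      intro h0
      exact hj (by rw [hv'app, h0]; simp)
    have hieq : (p x).1 = i₀ := uniq aR haRI _ v' _ v₀ haRdec hv'mem h₀ hv₀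
    have hxZ : x ∈ Z (p x).1 := hx2 x hx x (by omega)
    exact hZ0 x (hieq ▸ hxZ) hx
  have hcnt : ∀ x ∈ s, t ≤ ((Z (p x).1).filter fun j => j ∈ s ∧ j ≠ x).card := by
    intro x hx
    have hZsub := hZs x hx (p x).1 ⟨(p x).2, hx1 x hx, hx2 x hx⟩
    have hsp := Finset.card_filter_add_card_filter_not
      (s := Z (p x).1) (p := fun j : Fin n => (j : ℕ) < r)
    have h1 : ((Z (p x).1).filter fun j : Fin n => (j : ℕ) < r).card ≤ r := by
      refine le_trans (Finset.card_le_card fun j hj => ?_) (le_of_eq cardR)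
      simp only [Finset.mem_filter] at hj ⊢
      exact ⟨Finset.mem_univ j, hj.2⟩
    have h2 : ((Z (p x).1).filter fun j : Fin n => ¬ (j : ℕ) < r) ⊆
        insert x ((Z (p x).1).filter fun j => j ∈ s ∧ j ≠ x) := by
      intro j hj
      simp only [Finset.mem_filter] at hj
      rcases eq_or_ne j x with rfl | hjx
      · exact Finset.mem_insert_self _ _
      · refine Finset.mem_insert_of_mem ?_
        simp only [Finset.mem_filter]
        rcases hZsub j hj.1 with hlt | hs'
        · exact absurd hlt hj.2
        · exact ⟨hj.1, hs', hjx⟩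
    have h3 := Finset.card_le_card h2
    have h4 := Finset.card_insert_le x ((Z (p x).1).filter fun j => j ∈ s ∧ j ≠ x)
    have h5 := hcard (p x).1
    omega
  have hanti : ∀ x ∈ s, ∀ y ∈ s, y ≠ x → y ∈ Z (p x).1 → x ∈ Z (p y).1 → False := by
    intro x hx y hy hyx hyZ hxZ
    have e1 : aR + Finsupp.single x 1 + Finsupp.single y 1
        = u (p x).1 + ((p x).2 + Finsupp.single y 1) := by
      rw [hx1 x hx, add_assoc]
    have hm1 : ∀ j, ((p x).2 + Finsupp.single y 1 : Fin n →₀ ℕ) j ≠ 0 → j ∈ Z (p x).1 := by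
      intro j hj
      rcases eq_or_ne j y with rfl | hjy
      · exact hyZ
      · apply hx2 x hx j
        intro h0
        apply hj
        rw [Finsupp.add_apply, h0, zero_add, Finsupp.single_eq_of_ne' (Ne.symm hjy)]
    have e2 : aR + Finsupp.single x 1 + Finsupp.single y 1
        = u (p y).1 + ((p y).2 + Finsupp.single x 1) := by
      rw [add_right_comm, hx1 y hy, add_assoc]
    have hm2 : ∀ j, ((p y).2 + Finsupp.single x 1 : Fin n →₀ ℕ) j ≠ 0 → j ∈ Z (p y).1 := by
      intro j hj
      rcases eq_or_ne j x with rfl | hjx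
      · exact hxZ
      · apply hx2 y hy j
        intro h0
        apply hj
        rw [Finsupp.add_apply, h0, zero_add, Finsupp.single_eq_of_ne' (Ne.symm hjx)]
    have hieq : (p x).1 = (p y).1 :=
      uniq _ (hAxy x hx y hy hyx) _ _ _ _ e1 hm1 e2 hm2
    have h3 := DFunLike.congr_fun (hx1 x hx) y
    rw [Finsupp.add_apply, Finsupp.add_apply, haRval, if_neg (hsR y hy),
      Finsupp.single_eq_of_ne' (Ne.symm hyx), zero_add] at h3
    have h4 : u (p x).1 y = 0 := by omega
    exact c1 y hy (hieq ▸ h4)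
  exact count_contra Z (fun x => (p x).1) s hs0 hsq hq2t hcnt hanti

lemma key {n r e q : ℕ} (hr : 0 < r) (hre : r ≤ e) (heq : e ≤ q) (hn : r + e + q = n)
    {ι : Type} [Nonempty ι] (u : ι → (Fin n →₀ ℕ)) (Z : ι → Finset (Fin n)) (d : ℕ)
    (hcard : ∀ i, d ≤ (Z i).card)
    (notmem : ∀ (i : ι) (w : Fin n →₀ ℕ), (∀ j, w j ≠ 0 → j ∈ Z i) → ¬ Mem3 r e (u i + w))
    (cover : ∀ a : Fin n →₀ ℕ, ¬ Mem3 r e a →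
      ∃ i v, a = u i + v ∧ ∀ j, v j ≠ 0 → j ∈ Z i)
    (uniq : ∀ a : Fin n →₀ ℕ, ¬ Mem3 r e a → ∀ i v i' v',
      a = u i + v → (∀ j, v j ≠ 0 → j ∈ Z i) →
      a = u i' + v' → (∀ j, v' j ≠ 0 → j ∈ Z i') → i = i') :
    d ≤ r + min e ((q + 1) / 2) := by
  classical
  have h0n : 0 < n := by omega
  have hren : r + e ≤ n := by omega
  have hw : ∀ (i : ι) (v : Fin n →₀ ℕ), (∀ j, v j ≠ 0 → j ∈ Z i) →
      ∀ j, (v + ind (Z i) : Fin n →₀ ℕ) j ≠ 0 → j ∈ Z i := by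
    intro i v hv j hj
    by_contra hjZ
    apply hj
    have hv0 : v j = 0 := by
      by_contra h
      exact hjZ (hv j h)
    rw [Finsupp.add_apply, hv0, ind_apply, if_neg hjZ]
  -- Bound 1 : d ≤ r + e
  have bound1 : d ≤ r + e := by
    set a : Fin n →₀ ℕ := ind (Finset.univ.filter fun j : Fin n => (j : ℕ) < r + e) with ha
    have haval : ∀ j : Fin n, a j = if (j : ℕ) < r + e then 1 else 0 := by
      intro j; rw [ha, ind_apply]; simp
    have haI : ¬ Mem3 r e a := by
      rintro ⟨-, -, j, hj1, hj2⟩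
      exact hj2 (by rw [haval, if_neg (by omega)])
    obtain ⟨i, v, hav, hv⟩ := cover a haI
    have hsat : ¬ Mem3 r e (a + ind (Z i)) := by
      have h2 := notmem i (v + ind (Z i)) (hw i v hv)
      rw [← add_assoc, ← hav] at h2
      exact h2
    have hZsub : ∀ j ∈ Z i, (j : ℕ) < r + e := by
      intro j hjZ
      by_contra hjn
      apply hsat
      refine ⟨⟨⟨0, h0n⟩, hr, ?_⟩, ⟨⟨r, by omega⟩, le_refl r, show r < r + e by omega, ?_⟩, ⟨j, by omega, ?_⟩⟩
      · rw [Finsupp.add_apply, haval, if_pos (show (0:ℕ) < r + e by omega)]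
        omega
      · rw [Finsupp.add_apply, haval, if_pos (show r < r + e by omega)]
        omega
      · have hiv : ind (Z i) j = 1 := by rw [ind_apply, if_pos hjZ]
        rw [Finsupp.add_apply, haval, if_neg (by omega), hiv]
        omega
    have hsub2 : Z i ⊆ Finset.univ.filter fun j : Fin n => (j : ℕ) < r + e := by
      intro j hj
      simp only [Finset.mem_filter]
      exact ⟨Finset.mem_univ j, hZsub j hj⟩
    have hle := Finset.card_le_card hsub2
    rw [card_filter_lt _ hren] at hle
    exact (hcard i).trans hle
  rcases Nat.lt_or_ge d (r + (q + 1) / 2 + 1) with hd | hd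
  · omega
  exfalso
  set t := (q + 1) / 2 with ht
  have hq2t : q ≤ 2 * t := by omega
  set aR : Fin n →₀ ℕ := ind (Finset.univ.filter fun j : Fin n => (j : ℕ) < r) with haR
  have haRval : ∀ j : Fin n, aR j = if (j : ℕ) < r then 1 else 0 := by
    intro j; rw [haR, ind_apply]; simp
  have haRI : ¬ Mem3 r e aR := by
    rintro ⟨-, ⟨j, hj1, hj2, hj3⟩, -⟩
    exact hj3 (by rw [haRval, if_neg (by omega)])
  obtain ⟨i₀, v₀, h₀, hv₀⟩ := cover aR haRI
  have hsat0 : ¬ Mem3 r e (aR + ind (Z i₀)) := by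
    have h2 := notmem i₀ (v₀ + ind (Z i₀)) (hw i₀ v₀ hv₀)
    rw [← add_assoc, ← h₀] at h2
    exact h2
  have hfirst : ∀ b : Fin n →₀ ℕ, (aR + b : Fin n →₀ ℕ) ⟨0, h0n⟩ ≠ 0 := by
    intro b
    rw [Finsupp.add_apply, haRval, if_pos (show (0:ℕ) < r from hr)]
    omega
  have hsplit : (∀ j : Fin n, r ≤ (j : ℕ) → (j : ℕ) < r + e → (aR + ind (Z i₀) : Fin n →₀ ℕ) j = 0) ∨
      (∀ j : Fin n, r + e ≤ (j : ℕ) → (aR + ind (Z i₀) : Fin n →₀ ℕ) j = 0) := by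
    by_contra hc
    push_neg at hc
    obtain ⟨⟨j1, hj1a, hj1b, hj1c⟩, ⟨j2, hj2a, hj2c⟩⟩ := hc
    exact hsat0 ⟨⟨⟨0, h0n⟩, hr, hfirst _⟩, ⟨j1, hj1a, hj1b, hj1c⟩, ⟨j2, hj2a, hj2c⟩⟩
  have cardRlem : (Finset.univ.filter fun j : Fin n => (j : ℕ) < r).card = r :=
    card_filter_lt r (by omega)
  rcases hsplit with hE | hQ
  · -- Case A : Z i₀ misses the middle block; count within the middle block
    set s : Finset (Fin n) := Finset.univ.filter
      (fun j : Fin n => r ≤ (j : ℕ) ∧ (j : ℕ) < r + e) with hs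
    have hmem_s : ∀ j : Fin n, j ∈ s ↔ (r ≤ (j : ℕ) ∧ (j : ℕ) < r + e) := by
      intro j; rw [hs]; simp
    have hscard : s.card = e := card_filter_mid r e hren
    refine main_case u Z hcard hd hq2t cardRlem cover uniq aR haRval haRI i₀ v₀ h₀ hv₀ s
      (by omega) (by omega) ?_ ?_ ?_ ?_ ?_
    · intro x hx
      have := (hmem_s x).1 hx
      omega
    · intro j hjZ hjs
      have hj := (hmem_s j).1 hjs
      have hval := hE j hj.1 hj.2
      have hiv : ind (Z i₀) j = 1 := by rw [ind_apply, if_pos hjZ]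
      rw [Finsupp.add_apply, hiv] at hval
      omega
    · intro x hx
      have hxs := (hmem_s x).1 hx
      rintro ⟨-, -, j, hj1, hj2⟩
      apply hj2
      have hxj : x ≠ j := by
        intro hxe
        rw [hxe] at hxs
        omega
      rw [Finsupp.add_apply, haRval, if_neg (by omega), Finsupp.single_eq_of_ne' hxj]
      omega
    · intro x hx y hy hyx
      have hxs := (hmem_s x).1 hx
      have hys := (hmem_s y).1 hy
      rintro ⟨-, -, j, hj1, hj2⟩
      apply hj2
      have hxj : x ≠ j := by
        intro hxe; rw [hxe] at hxs; omega
      have hyj : y ≠ j := by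
        intro hye; rw [hye] at hys; omega
      rw [Finsupp.add_apply, Finsupp.add_apply, haRval, if_neg (by omega),
        Finsupp.single_eq_of_ne' hxj, Finsupp.single_eq_of_ne' hyj]
      omega
    · intro x hx i hex j hjZ
      obtain ⟨v, hev, hvm⟩ := hex
      have hxs := (hmem_s x).1 hx
      have hsatx : ¬ Mem3 r e (aR + Finsupp.single x 1 + ind (Z i)) := by
        have h2 := notmem i (v + ind (Z i)) (hw i v hvm)
        rw [← add_assoc, ← hev] at h2
        exact h2
      by_contra hcon
      push_neg at hcon
      obtain ⟨hc1, hc2⟩ := hcon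
      have hjs : ¬ (r ≤ (j : ℕ) ∧ (j : ℕ) < r + e) := fun hh => hc2 ((hmem_s j).2 hh)
      apply hsatx
      refine ⟨⟨⟨0, h0n⟩, hr, ?_⟩, ⟨x, hxs.1, hxs.2, ?_⟩, ⟨j, by omega, ?_⟩⟩
      · rw [Finsupp.add_apply, Finsupp.add_apply, haRval,
          if_pos (show (0:ℕ) < r from hr)]
        omega
      · rw [Finsupp.add_apply, Finsupp.add_apply, haRval, if_neg (by omega),
          Finsupp.single_eq_same]
        omega
      · have hiv : ind (Z i) j = 1 := by rw [ind_apply, if_pos hjZ]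
        rw [Finsupp.add_apply, Finsupp.add_apply, hiv]
        omega
  · -- Case B : Z i₀ misses the last block; count within the last block
    set s : Finset (Fin n) := Finset.univ.filter
      (fun j : Fin n => r + e ≤ (j : ℕ)) with hs
    have hmem_s : ∀ j : Fin n, j ∈ s ↔ r + e ≤ (j : ℕ) := by
      intro j; rw [hs]; simp
    have hscard : s.card = q := by
      rw [hs, card_filter_ge (r + e) hren]
      omega
    refine main_case u Z hcard hd hq2t cardRlem cover uniq aR haRval haRI i₀ v₀ h₀ hv₀ s
      (by omega) (by omega) ?_ ?_ ?_ ?_ ?_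
    · intro x hx
      have := (hmem_s x).1 hx
      omega
    · intro j hjZ hjs
      have hj := (hmem_s j).1 hjs
      have hval := hQ j hj
      have hiv : ind (Z i₀) j = 1 := by rw [ind_apply, if_pos hjZ]
      rw [Finsupp.add_apply, hiv] at hval
      omega
    · intro x hx
      have hxs := (hmem_s x).1 hx
      rintro ⟨-, ⟨j, hj1, hj2, hj3⟩, -⟩
      apply hj3
      have hxj : x ≠ j := by
        intro hxe
        rw [hxe] at hxs
        omega
      rw [Finsupp.add_apply, haRval, if_neg (by omega), Finsupp.single_eq_of_ne' hxj]
      omega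
    · intro x hx y hy hyx
      have hxs := (hmem_s x).1 hx
      have hys := (hmem_s y).1 hy
      rintro ⟨-, ⟨j, hj1, hj2, hj3⟩, -⟩
      apply hj3
      have hxj : x ≠ j := by
        intro hxe; rw [hxe] at hxs; omega
      have hyj : y ≠ j := by
        intro hye; rw [hye] at hys; omega
      rw [Finsupp.add_apply, Finsupp.add_apply, haRval, if_neg (by omega),
        Finsupp.single_eq_of_ne' hxj, Finsupp.single_eq_of_ne' hyj]
      omega
    · intro x hx i hex j hjZ
      obtain ⟨v, hev, hvm⟩ := hex
      have hxs := (hmem_s x).1 hx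
      have hsatx : ¬ Mem3 r e (aR + Finsupp.single x 1 + ind (Z i)) := by
        have h2 := notmem i (v + ind (Z i)) (hw i v hvm)
        rw [← add_assoc, ← hev] at h2
        exact h2
      by_contra hcon
      push_neg at hcon
      obtain ⟨hc1, hc2⟩ := hcon
      have hjs : ¬ (r + e ≤ (j : ℕ)) := fun hh => hc2 ((hmem_s j).2 hh)
      apply hsatx
      refine ⟨⟨⟨0, h0n⟩, hr, ?_⟩, ⟨j, by omega, by omega, ?_⟩, ⟨x, hxs, ?_⟩⟩
      · rw [Finsupp.add_apply, Finsupp.add_apply, haRval,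
          if_pos (show (0:ℕ) < r from hr)]
        omega
      · have hiv : ind (Z i) j = 1 := by rw [ind_apply, if_pos hjZ]
        rw [Finsupp.add_apply, Finsupp.add_apply, hiv]
        omega
      · rw [Finsupp.add_apply, Finsupp.add_apply, haRval, if_neg (by omega),
          Finsupp.single_eq_same]
        omega

lemma support_subset_of_mem_span_monomials {K : Type*} [Field K] {n : ℕ}
    (T : Set (Fin n →₀ ℕ)) (g : MvPolynomial (Fin n) K)
    (hg : g ∈ Submodule.span K ((fun m => monomial m (1 : K)) '' T)) :
    ∀ a, coeff a g ≠ 0 → a ∈ T := by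
  induction hg using Submodule.span_induction with
  | mem x hx =>
    obtain ⟨m, hm, rfl⟩ := hx
    intro a ha
    rw [coeff_monomial] at ha
    by_cases hma : m = a
    · exact hma ▸ hm
    · rw [if_neg hma] at ha
      exact absurd rfl ha
  | zero =>
    intro a ha
    rw [coeff_zero] at ha
    exact absurd rfl ha
  | add x y hx hy ihx ihy =>
    intro a ha
    rw [coeff_add] at ha
    by_cases h1 : coeff a x = 0
    · refine ihy a fun h2 => ?_
      rw [h1, h2, add_zero] at ha
      exact ha rfl
    · exact ihx a h1
  | smul c x hx ih =>
    intro a ha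
    refine ih a fun h0 => ?_
    rw [coeff_smul, h0, smul_zero] at ha
    exact ha rfl

/-- **Proposition 2.3.** With `P_1, P_2, P_3` as in Corollary 2.2, if it is not the case that
`e = r + 1` with `r` odd, then `sdepth S/I ≤ r + min(e, ⌈q/2⌉)`. -/
theorem sdepth_quot_le_three_disjoint_primes' {K : Type*} [Field K] {r e q n : ℕ}
    (hr : 0 < r) (hre : r ≤ e) (heq : e ≤ q) (hn : r + e + q = n)
    (hexc : ¬ (e = r + 1 ∧ Odd r))
    (P₁ P₂ P₃ I : Ideal (MvPolynomial (Fin n) K))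
    (hP₁ : P₁ = Ideal.span
      ((fun j => (X j : MvPolynomial (Fin n) K)) '' {i : Fin n | (i : ℕ) < r}))
    (hP₂ : P₂ = Ideal.span
      ((fun j => (X j : MvPolynomial (Fin n) K)) '' {i : Fin n | r ≤ (i : ℕ) ∧ (i : ℕ) < r + e}))
    (hP₃ : P₃ = Ideal.span
      ((fun j => (X j : MvPolynomial (Fin n) K)) '' {i : Fin n | r + e ≤ (i : ℕ)}))
    (hI : I = P₁ ⊓ P₂ ⊓ P₃) :
    sdepthQuot I ≤ r + min e ((q + 1) / 2) := by
  classical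
  apply csSup_le'
  rintro d ⟨ι, hfin, hne, u, Z, ⟨hdisj, hindep, hsup⟩, hcZ⟩
  haveI := hne

  -- membership in `I` is a support-wise condition
  have hImem : ∀ p : MvPolynomial (Fin n) K, p ∈ I ↔ ∀ m ∈ p.support, Mem3 r e m := by
    intro p
    rw [hI, Submodule.mem_inf, Submodule.mem_inf, hP₁, hP₂, hP₃,
      mem_ideal_span_X_image, mem_ideal_span_X_image, mem_ideal_span_X_image]
    constructor
    · rintro ⟨⟨h1, h2⟩, h3⟩ m hm
      obtain ⟨j1, hj1, hv1⟩ := h1 m hm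
      obtain ⟨j2, hj2, hv2⟩ := h2 m hm
      obtain ⟨j3, hj3, hv3⟩ := h3 m hm
      exact ⟨⟨j1, hj1, hv1⟩, ⟨j2, hj2.1, hj2.2, hv2⟩, ⟨j3, hj3, hv3⟩⟩
    · intro h
      refine ⟨⟨fun m hm => ?_, fun m hm => ?_⟩, fun m hm => ?_⟩
      · obtain ⟨⟨j, hj, hv⟩, -, -⟩ := h m hm
        exact ⟨j, hj, hv⟩
      · obtain ⟨-, ⟨j, hj1, hj2, hv⟩, -⟩ := h m hm
        exact ⟨j, ⟨hj1, hj2⟩, hv⟩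
      · obtain ⟨-, -, j, hj, hv⟩ := h m hm
        exact ⟨j, hj, hv⟩
  have hMonI : ∀ a : Fin n →₀ ℕ, (monomial a (1 : K)) ∈ I ↔ Mem3 r e a := by
    intro a
    rw [hImem]
    constructor
    · intro h
      apply h
      rw [mem_support_iff, coeff_monomial, if_pos rfl]
      exact one_ne_zero
    · intro h m hm
      rw [mem_support_iff, coeff_monomial] at hm
      by_cases hma : a = m
      · exact hma ▸ h
      · rw [if_neg hma] at hm
        exact absurd rfl hm
  -- the Stanley spaces contain no monomials of `I`
  have notmem : ∀ (i : ι) (w : Fin n →₀ ℕ), (∀ j, w j ≠ 0 → j ∈ Z i) →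
      ¬ Mem3 r e (u i + w) := by
    intro i w hws hmem
    have h1 : (monomial (u i + w) (1 : K)) ∈ stanleySpace K (u i) (Z i) := by
      apply Submodule.subset_span
      exact ⟨w, fun j hj =>
        Finset.mem_coe.mpr (hws j (Finsupp.mem_support_iff.mp (Finset.mem_coe.mp hj))), rfl⟩
    have h2 : (monomial (u i + w) (1 : K)) ∈ Submodule.restrictScalars K I := (hMonI _).2 hmem
    have h0 := Submodule.disjoint_def.mp (hdisj i) _ h1 h2
    have h1' : (1 : K) = 0 := by
      have hc := congrArg (coeff (u i + w)) h0
      rwa [coeff_monomial, if_pos rfl, coeff_zero] at hc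
    exact one_ne_zero h1'
  set mkl := (Ideal.Quotient.mkₐ K I).toLinearMap with hmkl
  have hSp : ∀ i, stanleySpace K (u i) (Z i) =
      Submodule.span K ((fun m => monomial m (1 : K)) ''
        ((fun v => u i + v) '' {v : Fin n →₀ ℕ | (↑v.support : Set (Fin n)) ⊆ ↑(Z i)})) := by
    intro i
    rw [stanleySpace, Set.image_image]
  have hsup' : Submodule.map mkl (Submodule.span K ((fun m => monomial m (1 : K)) ''
      (⋃ i, (fun v => u i + v) '' {v : Fin n →₀ ℕ | (↑v.support : Set (Fin n)) ⊆ ↑(Z i)}))) = ⊤ := by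
    rw [Set.image_iUnion, Submodule.span_iUnion, Submodule.map_iSup, ← hsup]
    exact iSup_congr fun i => by rw [hSp i]
  have cover : ∀ a : Fin n →₀ ℕ, ¬ Mem3 r e a →
      ∃ i v, a = u i + v ∧ ∀ j, v j ≠ 0 → j ∈ Z i := by
    intro a ha
    have hmk : mkl (monomial a (1 : K)) ∈ Submodule.map mkl
        (Submodule.span K ((fun m => monomial m (1 : K)) ''
          (⋃ i, (fun v => u i + v) ''
            {v : Fin n →₀ ℕ | (↑v.support : Set (Fin n)) ⊆ ↑(Z i)}))) := by
      rw [hsup']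
      exact Submodule.mem_top
    obtain ⟨g, hg, hgeq⟩ := hmk
    have hsub : g - monomial a (1 : K) ∈ I := by
      have hq : Ideal.Quotient.mk I g = Ideal.Quotient.mk I (monomial a (1 : K)) := hgeq
      rwa [Ideal.Quotient.mk_eq_mk_iff_sub_mem] at hq
    have hcg : coeff a g ≠ 0 := by
      intro hc
      have hae : a ∈ (g - monomial a (1 : K)).support := by
        rw [mem_support_iff, coeff_sub, hc, coeff_monomial, if_pos rfl, zero_sub]
        exact neg_ne_zero.mpr one_ne_zero
      exact ha ((hImem _).1 hsub a hae)
    have hmemT := support_subset_of_mem_span_monomials _ g hg a hcg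
    simp only [Set.mem_iUnion, Set.mem_image, Set.mem_setOf_eq] at hmemT
    obtain ⟨i, v, hvsupp, hva⟩ := hmemT
    exact ⟨i, v, hva.symm, fun j hj =>
      Finset.mem_coe.mp (hvsupp (Finset.mem_coe.mpr (Finsupp.mem_support_iff.mpr hj)))⟩
  have uniq : ∀ a : Fin n →₀ ℕ, ¬ Mem3 r e a → ∀ i v i' v',
      a = u i + v → (∀ j, v j ≠ 0 → j ∈ Z i) →
      a = u i' + v' → (∀ j, v' j ≠ 0 → j ∈ Z i') → i = i' := by
    intro a ha i v i' v' h1 hsv h2 hsv'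
    by_contra hne
    have m1 : (monomial a (1 : K)) ∈ stanleySpace K (u i) (Z i) := by
      apply Submodule.subset_span
      exact ⟨v, fun j hj =>
        Finset.mem_coe.mpr (hsv j (Finsupp.mem_support_iff.mp (Finset.mem_coe.mp hj))),
        show monomial (u i + v) (1 : K) = monomial a 1 by rw [← h1]⟩
    have m2 : (monomial a (1 : K)) ∈ stanleySpace K (u i') (Z i') := by
      apply Submodule.subset_span
      exact ⟨v', fun j hj =>
        Finset.mem_coe.mpr (hsv' j (Finsupp.mem_support_iff.mp (Finset.mem_coe.mp hj))),
        show monomial (u i' + v') (1 : K) = monomial a 1 by rw [← h2]⟩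
    have q1 : mkl (monomial a (1 : K)) ∈
        Submodule.map mkl (stanleySpace K (u i) (Z i)) := Submodule.mem_map_of_mem m1
    have q2 : mkl (monomial a (1 : K)) ∈
        ⨆ j, ⨆ (_ : j ≠ i), Submodule.map mkl (stanleySpace K (u j) (Z j)) :=
      Submodule.mem_iSup_of_mem i'
        (Submodule.mem_iSup_of_mem (Ne.symm hne) (Submodule.mem_map_of_mem m2))
    have h0 := Submodule.disjoint_def.mp (hindep i) _ q1 q2
    have hIa : (monomial a (1 : K)) ∈ I := by
      rw [← Ideal.Quotient.eq_zero_iff_mem]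
      exact h0
    exact ha ((hMonI a).1 hIa)
  exact key hr hre heq hn u Z d hcZ notmem cover uniq
end

section
/- Let I' ⊆ S' = S[x_{n+1}] be a monomial ideal, where S = K[x_1,…,x_n] and x_{n+1} is a new variable. If I' ∩ S ≠ (0), then sdepth_S(I' ∩ S) ≥ sdepth_{S'}(I') − 1. -/
open MvPolynomial

noncomputable def spanMono (K : Type*) [Field K] {σ : Type*} (T : Set (σ →₀ ℕ)) :
    Submodule K (MvPolynomial σ K) :=
  Submodule.span K ((fun a => (monomial a (1 : K) : MvPolynomial σ K)) '' T)

lemma mem_spanMono_iff {K σ : Type*} [Field K] (T : Set (σ →₀ ℕ)) (p : MvPolynomial σ K) :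
    p ∈ spanMono K T ↔ (p.support : Set (σ →₀ ℕ)) ⊆ T := by
  classical
  constructor
  · intro hp
    have hle : spanMono K T ≤
        { carrier := {q : MvPolynomial σ K | (q.support : Set (σ →₀ ℕ)) ⊆ T}
          add_mem' := by
            intro a b ha hb
            exact Set.Subset.trans (by exact_mod_cast Finsupp.support_add)
              (Set.union_subset ha hb)
          zero_mem' := by simp
          smul_mem' := by
            intro c q hq
            refine Set.Subset.trans ?_ hq
            exact Finset.coe_subset.2 Finsupp.support_smul } := by
      apply Submodule.span_le.2
      rintro _ ⟨a, ha, rfl⟩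
      show ((monomial a (1:K) : MvPolynomial σ K).support : Set (σ →₀ ℕ)) ⊆ T
      rw [support_monomial]
      simp [ha]
    exact hle hp
  · intro hs
    rw [show p = ∑ v ∈ p.support, monomial v (coeff v p) from p.as_sum]
    refine Submodule.sum_mem _ fun v hv => ?_
    have : (monomial v (coeff v p) : MvPolynomial σ K) = coeff v p • monomial v 1 := by
      rw [smul_monomial, smul_eq_mul, mul_one]
    rw [this]
    exact Submodule.smul_mem _ _ (Submodule.subset_span ⟨v, hs hv, rfl⟩)

lemma monomial_mem_spanMono_iff {K σ : Type*} [Field K] (T : Set (σ →₀ ℕ)) (b : σ →₀ ℕ) :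
    (monomial b (1 : K)) ∈ spanMono K T ↔ b ∈ T := by
  classical
  rw [mem_spanMono_iff, support_monomial]
  simp

lemma iSup_spanMono {K σ : Type*} [Field K] {ι : Sort*} (T : ι → Set (σ →₀ ℕ)) :
    (⨆ i, spanMono K (T i)) = spanMono K (⋃ i, T i) := by
  apply le_antisymm
  · exact iSup_le fun i => Submodule.span_mono (Set.image_mono (Set.subset_iUnion T i))
  · apply Submodule.span_le.2
    rintro _ ⟨a, ha, rfl⟩
    obtain ⟨i, hi⟩ := Set.mem_iUnion.1 ha
    exact Submodule.mem_iSup_of_mem i (Submodule.subset_span ⟨a, hi, rfl⟩)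

lemma stanleySpace_eq_spanMono {K σ : Type*} [Field K] (u : σ →₀ ℕ) (Z : Set σ) :
    stanleySpace K u Z = spanMono K ((u + ·) '' {v | (v.support : Set σ) ⊆ Z}) := by
  rw [stanleySpace, spanMono, ← Set.image_comp]
  rfl

lemma monomial_mem_of_mem_monomialIdeal {K σ : Type*} [Field K] {I : Ideal (MvPolynomial σ K)}
    (hI : IsMonomialIdeal I) {p : MvPolynomial σ K} (hp : p ∈ I) :
    ∀ b ∈ p.support, (monomial b (1 : K)) ∈ I := by
  classical
  obtain ⟨A, rfl⟩ := hI
  set I := Ideal.span ((fun a => (monomial a (1 : K) : MvPolynomial σ K)) '' A) with hIdef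
  let J : Ideal (MvPolynomial σ K) :=
    { carrier := {q : MvPolynomial σ K | ∀ b ∈ q.support, (monomial b (1 : K)) ∈ I}
      add_mem' := by
        intro a b ha hb c hc
        rcases Finset.mem_union.1 (Finsupp.support_add hc) with h | h
        · exact ha c h
        · exact hb c h
      zero_mem' := by simp
      smul_mem' := by
        intro q p hp b hb
        rcases Finset.mem_add.1 (support_mul q p hb) with ⟨c, hc, d, hd, rfl⟩
        have : (monomial (c + d) (1 : K)) = monomial c 1 * monomial d 1 := by
          rw [monomial_mul, one_mul]
        rw [this]
        exact Ideal.mul_mem_left _ _ (hp d hd) }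
  have hle : I ≤ J := by
    rw [hIdef]
    apply Ideal.span_le.2
    rintro _ ⟨a, ha, rfl⟩
    intro b hb
    rw [support_monomial] at hb
    simp only [if_neg (one_ne_zero (α := K))] at hb
    rw [Finset.mem_singleton.1 hb]
    exact Ideal.subset_span ⟨a, ha, rfl⟩
  exact hle hp

lemma restrictScalars_eq_spanMono {K σ : Type*} [Field K] {I : Ideal (MvPolynomial σ K)}
    (hI : IsMonomialIdeal I) :
    Submodule.restrictScalars K I = spanMono K {b | (monomial b (1 : K)) ∈ I} := by
  apply le_antisymm
  · intro p hp
    rw [mem_spanMono_iff]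
    intro b hb
    exact monomial_mem_of_mem_monomialIdeal hI hp b hb
  · apply Submodule.span_le.2
    rintro _ ⟨a, ha, rfl⟩
    exact ha


lemma iSupIndep_of_map_injective {K M N : Type*} [Field K] [AddCommGroup M] [Module K M]
    [AddCommGroup N] [Module K N] {ι : Sort*} (f : M →ₗ[K] N) (hf : Function.Injective f)
    {W : ι → Submodule K M} (h : iSupIndep fun i => (W i).map f) : iSupIndep W := by
  intro i
  have hi := h i
  rw [disjoint_iff] at hi ⊢
  apply le_antisymm _ bot_le
  have h1 : W i ≤ Submodule.comap f ((W i).map f) := Submodule.le_comap_map f (W i)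
  have h2 : (⨆ (j) (_ : j ≠ i), W j) ≤
      Submodule.comap f (⨆ (j) (_ : j ≠ i), (W j).map f) := by
    refine iSup₂_le fun j hj => le_trans (Submodule.le_comap_map f (W j))
      (Submodule.comap_mono ?_)
    exact le_iSup₂ (f := fun (j : ι) (_ : j ≠ i) => (W j).map f) j hj
  calc W i ⊓ (⨆ (j) (_ : j ≠ i), W j)
      ≤ Submodule.comap f ((W i).map f) ⊓
        Submodule.comap f (⨆ (j) (_ : j ≠ i), (W j).map f) := inf_le_inf h1 h2
    _ = Submodule.comap f (((W i).map f) ⊓ ⨆ (j) (_ : j ≠ i), (W j).map f) := by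
        rw [Submodule.comap_inf]
    _ = Submodule.comap f ⊥ := by rw [hi]
    _ = ⊥ := by rw [Submodule.comap_bot, LinearMap.ker_eq_bot.2 hf]

lemma monomial_mem_iSup_stanley_iff {K σ : Type*} [Field K] {ι : Type} (u : ι → (σ →₀ ℕ))
    (Z : ι → Finset σ) (b : σ →₀ ℕ) :
    (monomial b (1 : K)) ∈ (⨆ i, stanleySpace K (u i) (Z i)) ↔
      ∃ i v, (v.support : Set σ) ⊆ ↑(Z i) ∧ b = u i + v := by
  simp_rw [stanleySpace_eq_spanMono, iSup_spanMono, monomial_mem_spanMono_iff,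
    Set.mem_iUnion, Set.mem_image, Set.mem_setOf_eq]
  constructor
  · rintro ⟨i, v, h1, h2⟩; exact ⟨i, v, h1, h2.symm⟩
  · rintro ⟨i, v, h1, h2⟩; exact ⟨i, v, h1, h2.symm⟩

/-- **Lemma 3.1.** If `I' ⊆ S' = S[x_{n+1}]` is a monomial ideal with `I' ∩ S ≠ 0`, then
`sdepth_S (I' ∩ S) ≥ sdepth_{S'} I' - 1`.  (Here `I' ∩ S` is the preimage of `I'` under the
inclusion `S ↪ S'`.) -/
theorem sdepth_contraction_ge {K : Type*} [Field K] {n : ℕ}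
    (I' : Ideal (MvPolynomial (Fin (n + 1)) K)) (hI' : IsMonomialIdeal I')
    (hne : Ideal.comap (rename (Fin.castSucc : Fin n → Fin (n + 1))).toRingHom I' ≠ ⊥) :
    sdepthIdeal I' - 1 ≤
      sdepthIdeal (Ideal.comap (rename (Fin.castSucc : Fin n → Fin (n + 1))).toRingHom I') := by
  classical
  rw [tsub_le_iff_right]
  set e : MvPolynomial (Fin n) K →+* MvPolynomial (Fin (n + 1)) K :=
    (rename (Fin.castSucc : Fin n → Fin (n + 1))).toRingHom with he
  set I := Ideal.comap e I' with hIdef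
  rw [sdepthIdeal, sdepthIdeal]
  set S' : Set ℕ := {d | ∃ (ι : Type) (_ : Fintype ι) (_ : Nonempty ι)
    (u : ι → (Fin (n + 1) →₀ ℕ)) (Z : ι → Finset (Fin (n + 1))),
    IsStanleyDecompOfIdeal I' u Z ∧ ∀ i, d ≤ (Z i).card} with hS'
  set SI : Set ℕ := {d | ∃ (ι : Type) (_ : Fintype ι) (_ : Nonempty ι)
    (u : ι → (Fin n →₀ ℕ)) (Z : ι → Finset (Fin n)),
    IsStanleyDecompOfIdeal I u Z ∧ ∀ i, d ≤ (Z i).card} with hSI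
  by_cases hA : S'.Nonempty
  swap
  · rw [Set.not_nonempty_iff_eq_empty.1 hA, csSup_empty]
    exact bot_le
  have hbdd : BddAbove S' := by
    refine ⟨n + 1, fun d hd => ?_⟩
    obtain ⟨ι, _, ⟨i⟩, u, Z, _, hc⟩ := hd
    exact (hc i).trans ((Finset.card_le_univ _).trans (by simp))
  have hmem := Nat.sSup_mem hA hbdd
  set d := sSup S' with hd
  obtain ⟨ι, _inst, _ne, u, Z, ⟨hind, hsup⟩, hcard⟩ := hmem
  set L : Fin (n + 1) := Fin.last n with hL
  have hcinj : Function.Injective (Fin.castSucc : Fin n → Fin (n + 1)) :=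
    Fin.castSucc_injective n
  have hLr : L ∉ Set.range (Fin.castSucc : Fin n → Fin (n + 1)) := by
    rintro ⟨j, hj⟩
    exact (Fin.castSucc_lt_last j).ne hj
  have hI'char : ∀ b' : Fin (n + 1) →₀ ℕ, (monomial b' (1 : K)) ∈ I' ↔
      ∃ i v, (v.support : Set (Fin (n + 1))) ⊆ ↑(Z i) ∧ b' = u i + v := by
    intro b'
    have h1 := monomial_mem_iSup_stanley_iff (K := K) u Z b'
    rw [hsup] at h1
    exact h1
  have hIchar : ∀ b : Fin n →₀ ℕ, (monomial b (1 : K)) ∈ I ↔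
      (monomial (Finsupp.mapDomain Fin.castSucc b) (1 : K)) ∈ I' := by
    intro b
    rw [hIdef, Ideal.mem_comap, he]
    have : (rename (Fin.castSucc : Fin n → Fin (n + 1))).toRingHom (monomial b (1 : K))
        = monomial (Finsupp.mapDomain Fin.castSucc b) (1 : K) := rename_monomial _ _ _
    rw [this]
  have hmonoI : ∀ p ∈ I, ∀ b ∈ p.support, (monomial b (1 : K)) ∈ I := by
    intro p hp b hb
    have hep : e p ∈ I' := Ideal.mem_comap.1 hp
    have hbsupp : Finsupp.mapDomain Fin.castSucc b ∈ (e p).support := by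
      rw [he]
      show _ ∈ ((rename (Fin.castSucc : Fin n → Fin (n + 1))) p).support
      rw [support_rename_of_injective hcinj]
      exact Finset.mem_image_of_mem _ hb
    exact (hIchar b).2 (monomial_mem_of_mem_monomialIdeal hI' hep _ hbsupp)
  have hzero : ∀ {i : ι} {v : Fin (n + 1) →₀ ℕ} {b : Fin n →₀ ℕ},
      Finsupp.mapDomain Fin.castSucc b = u i + v → u i L = 0 ∧ v L = 0 := by
    intro i v b heq
    have h0 : (Finsupp.mapDomain Fin.castSucc b) L = 0 :=
      Finsupp.mapDomain_notin_range _ _ hLr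
    rw [heq, Finsupp.add_apply] at h0
    omega
  have hne0 : Nonempty {i : ι // u i L = 0} := by
    obtain ⟨p, hpI, hp0⟩ := Submodule.exists_mem_ne_zero_of_ne_bot hne
    obtain ⟨b, hb⟩ := Finset.nonempty_iff_ne_empty.2
      (fun h => hp0 (support_eq_empty.1 h))
    obtain ⟨i, v, hv, heq⟩ := (hI'char _).1 ((hIchar b).1 (hmonoI p hpI b hb))
    exact ⟨⟨i, (hzero heq).1⟩⟩
  set u' : {i : ι // u i L = 0} → (Fin n →₀ ℕ) :=
    fun i => Finsupp.comapDomain Fin.castSucc (u i.1) hcinj.injOn with hu'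
  set Z' : {i : ι // u i L = 0} → Finset (Fin n) :=
    fun i => (Z i.1).preimage Fin.castSucc hcinj.injOn with hZ'
  have hmapd : ∀ (w : Fin (n + 1) →₀ ℕ), w L = 0 →
      Finsupp.mapDomain Fin.castSucc (Finsupp.comapDomain Fin.castSucc w hcinj.injOn) = w := by
    intro w hw
    ext j
    induction j using Fin.lastCases with
    | last => rw [Finsupp.mapDomain_notin_range _ _ hLr]; exact hw.symm
    | cast j =>
      rw [Finsupp.mapDomain_apply hcinj, Finsupp.comapDomain_apply]
  have hmapu : ∀ i : {i : ι // u i L = 0},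
      Finsupp.mapDomain Fin.castSucc (u' i) = u i.1 := fun i => hmapd _ i.2
  have hZcard : ∀ i : {i : ι // u i L = 0}, (Z i.1).card ≤ (Z' i).card + 1 := by
    intro i
    have hsub : Z i.1 ⊆ (Z' i).image Fin.castSucc ∪ {L} := by
      intro z hz
      by_cases hzL : z = L
      · exact Finset.mem_union_right _ (Finset.mem_singleton.2 hzL)
      · obtain ⟨j, rfl⟩ := Fin.exists_castSucc_eq.2 hzL
        exact Finset.mem_union_left _
          (Finset.mem_image_of_mem _ (Finset.mem_preimage.2 hz))
    calc (Z i.1).card ≤ ((Z' i).image Fin.castSucc ∪ {L}).card := Finset.card_le_card hsub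
      _ ≤ ((Z' i).image Fin.castSucc).card + 1 := by
          simpa using Finset.card_union_le ((Z' i).image Fin.castSucc) {L}
      _ ≤ (Z' i).card + 1 := Nat.add_le_add_right (Finset.card_image_le) 1
  have hsuppmap : ∀ (v : Fin n →₀ ℕ) (i : {i : ι // u i L = 0}),
      ((v.support : Set (Fin n)) ⊆ ↑(Z' i)) →
      (((Finsupp.mapDomain Fin.castSucc v).support : Set (Fin (n + 1))) ⊆ ↑(Z i.1)) := by
    intro v i hv z hz
    rw [Finset.mem_coe, Finsupp.mapDomain_support_of_injective hcinj] at hz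
    obtain ⟨j, hj, rfl⟩ := Finset.mem_image.1 hz
    have hj' : j ∈ Z' i := hv hj
    rw [hZ'] at hj'
    exact Finset.mem_coe.2 (Finset.mem_preimage.1 hj')
  have hIspan : Submodule.restrictScalars K I = spanMono K {b | (monomial b (1 : K)) ∈ I} := by
    apply le_antisymm
    · intro p hp
      rw [mem_spanMono_iff]
      intro b hb
      exact hmonoI p hp b hb
    · apply Submodule.span_le.2
      rintro _ ⟨a, ha, rfl⟩
      exact ha
  have hsup' : (⨆ i : {i : ι // u i L = 0}, stanleySpace K (u' i) (Z' i))
      = Submodule.restrictScalars K I := by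
    simp_rw [stanleySpace_eq_spanMono, iSup_spanMono]
    rw [hIspan]
    congr 1
    ext b
    simp only [Set.mem_iUnion, Set.mem_image, Set.mem_setOf_eq]
    constructor
    · rintro ⟨i, v, hv, rfl⟩
      rw [hIchar, Finsupp.mapDomain_add, hmapu i]
      exact (hI'char _).2 ⟨i.1, Finsupp.mapDomain Fin.castSucc v, hsuppmap v i hv, rfl⟩
    · intro hb
      obtain ⟨i, v, hv, heq⟩ := (hI'char _).1 ((hIchar b).1 hb)
      have h0 := hzero heq
      refine ⟨⟨i, h0.1⟩, Finsupp.comapDomain Fin.castSucc v hcinj.injOn, ?_, ?_⟩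
      · intro j hj
        rw [Finset.mem_coe, Finsupp.mem_support_iff, Finsupp.comapDomain_apply] at hj
        refine Finset.mem_coe.2 ?_
        rw [hZ']
        exact Finset.mem_preimage.2 (hv (Finsupp.mem_support_iff.2 hj))
      · ext j
        have hbj : (Finsupp.mapDomain Fin.castSucc b) (Fin.castSucc j) = b j :=
          Finsupp.mapDomain_apply hcinj _ _
        rw [heq] at hbj
        simp only [Finsupp.add_apply, hu', Finsupp.comapDomain_apply]
        rw [← Finsupp.add_apply]
        exact hbj
  set f := (rename (Fin.castSucc : Fin n → Fin (n + 1)) :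
    MvPolynomial (Fin n) K →ₐ[K] MvPolynomial (Fin (n + 1)) K).toLinearMap with hf
  have hfinj : Function.Injective f := rename_injective _ hcinj
  have hmapspace : ∀ i : {i : ι // u i L = 0},
      (stanleySpace K (u' i) (Z' i)).map f ≤ stanleySpace K (u i.1) (Z i.1) := by
    intro i
    rw [stanleySpace, Submodule.map_span]
    apply Submodule.span_le.2
    rintro _ ⟨_, ⟨v, hv, rfl⟩, rfl⟩
    have hfm : f (monomial (u' i + v) (1 : K))
        = monomial (Finsupp.mapDomain Fin.castSucc (u' i + v)) (1 : K) :=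
      rename_monomial _ _ _
    rw [hfm, Finsupp.mapDomain_add, hmapu i]
    exact Submodule.subset_span ⟨Finsupp.mapDomain Fin.castSucc v, hsuppmap v i hv, rfl⟩
  have hindmap : iSupIndep (fun i : {i : ι // u i L = 0} =>
      (stanleySpace K (u' i) (Z' i)).map f) :=
    (hind.comp Subtype.val_injective).mono hmapspace
  have hind' : iSupIndep (fun i : {i : ι // u i L = 0} => stanleySpace K (u' i) (Z' i)) :=
    iSupIndep_of_map_injective f hfinj hindmap
  have hdmem : d - 1 ∈ SI := by
    refine ⟨{i : ι // u i L = 0}, inferInstance, hne0, u', Z', ⟨hind', hsup'⟩, fun i => ?_⟩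
    have h1 := hcard i.1
    have h2 := hZcard i
    omega
  have hbddI : BddAbove SI := by
    refine ⟨n, fun d hd => ?_⟩
    obtain ⟨ι', _, ⟨i⟩, u'', Z'', _, hc⟩ := hd
    exact (hc i).trans ((Finset.card_le_univ _).trans (by simp))
  have hfin : d - 1 ≤ sSup SI := le_csSup hbddI hdmem
  omega
end

section
/- Let I = P_1 ∩ P_2 ∩ P_3, where P_1, P_2, P_3 are monomial prime ideals of S = K[x_1,…,x_n] such that G(P_i) ∩ G(P_j) = ∅ for all i ≠ j and P_1 + P_2 + P_3 = m = (x_1,…,x_n), and set d_i = height(P_i) (so d_1 + d_2 + d_3 = n). Then sdepth_S(I) ≤ 3 + (1/(d_1 d_2 d_3)) · [ C(n,4) − Σ_{i=1}^3 C(d_i,4) − Σ_{i=1}^3 C(d_i,3)(n − d_i) − Σ_{1 ≤ i < j ≤ 3} C(d_i,2)C(d_j,2) ]. -/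
open MvPolynomial

section Aux

variable {K : Type*} [Field K] {n : ℕ}

/-- monomial membership in the span of a set of variables -/
theorem memA (A : Finset (Fin n)) (m : Fin n →₀ ℕ) :
    (monomial m (1:K)) ∈ Ideal.span ((fun j => (X j : MvPolynomial (Fin n) K)) '' (A : Set (Fin n)))
      ↔ ∃ j ∈ A, m j ≠ 0 := by
  constructor
  · intro hm
    by_contra h
    push_neg at h
    set f : Fin n → K := fun j => if j ∈ A then 0 else 1 with hf
    have hker : Ideal.span ((fun j => (X j : MvPolynomial (Fin n) K)) '' (A : Set (Fin n)))
        ≤ RingHom.ker (aeval f).toRingHom := by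
      rw [Ideal.span_le]
      rintro _ ⟨j, hj, rfl⟩
      simp only [Finset.mem_coe] at hj
      simp [RingHom.mem_ker, hf, hj]
    have := hker hm
    rw [RingHom.mem_ker] at this
    simp only [AlgHom.toRingHom_eq_coe, RingHom.coe_coe, aeval_monomial, map_one, one_mul] at this
    rw [Finsupp.prod] at this
    have : (1 : K) = 0 := by
      rw [← this]
      rw [Finset.prod_eq_one]
      intro j hj
      have hjA : j ∉ A := fun hjA => (Finsupp.mem_support_iff.mp hj) (h j hjA)
      simp [hf, hjA]
    exact one_ne_zero this
  · rintro ⟨j, hj, hmj⟩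
    have hm2 : m = Finsupp.single j 1 + (m - Finsupp.single j 1) := by
      ext x
      rw [Finsupp.add_apply, Finsupp.tsub_apply, Finsupp.single_apply]
      rcases eq_or_ne j x with rfl | hne
      · rw [if_pos rfl]
        omega
      · rw [if_neg hne]
        omega
    have : monomial m (1:K) = X j * monomial (m - Finsupp.single j 1) 1 := by
      rw [X, monomial_mul, one_mul, ← hm2]
    rw [this]
    exact Ideal.mul_mem_right _ _ (Ideal.subset_span ⟨j, hj, rfl⟩)

variable {σ : Type*}

theorem stanley_eq_span (u : σ →₀ ℕ) (Z : Set σ) :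
    stanleySpace K u Z = Submodule.span K
      ((basisMonomials σ K) '' ((u + ·) '' {v | (v.support : Set σ) ⊆ Z})) := by
  rw [stanleySpace, coe_basisMonomials, Set.image_image]

theorem mem_stanley (u v : σ →₀ ℕ) (Z : Set σ) (hv : (v.support : Set σ) ⊆ Z) :
    (monomial (u + v) (1:K)) ∈ stanleySpace K u Z :=
  Submodule.subset_span ⟨v, hv, rfl⟩

theorem mono_mem_iSup {ι : Type} (u : ι → (σ →₀ ℕ)) (Z : ι → Set σ) (g : σ →₀ ℕ)
    (hg : (monomial g (1:K)) ∈ ⨆ i, stanleySpace K (u i) (Z i)) :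
    ∃ i v, g = u i + v ∧ (v.support : Set σ) ⊆ Z i := by
  simp only [stanley_eq_span] at hg
  rw [← Submodule.span_iUnion, ← Set.image_iUnion] at hg
  have : (basisMonomials σ K) g ∈ Submodule.span K
      ((basisMonomials σ K) '' ⋃ i, ((u i + ·) '' {v | (v.support : Set σ) ⊆ Z i})) := by
    rwa [coe_basisMonomials]
  rw [Module.Basis.self_mem_span_image] at this
  obtain ⟨i, hi⟩ := Set.mem_iUnion.mp this
  obtain ⟨v, hv, rfl⟩ := hi
  exact ⟨i, v, rfl, hv⟩

theorem mono_not_two {ι : Type} (S : ι → Submodule K (MvPolynomial σ K))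
    (hind : iSupIndep S) {i j : ι} (hij : i ≠ j) (m : σ →₀ ℕ)
    (hi : (monomial m (1:K)) ∈ S i) (hj : (monomial m (1:K)) ∈ S j) : False := by
  have h2 : (monomial m (1:K)) ∈ ⨆ k, ⨆ _ : k ≠ i, S k :=
    Submodule.mem_iSup_of_mem j (Submodule.mem_iSup_of_mem (Ne.symm hij) hj)
  have := (hind i).eq_bot ▸ Submodule.mem_inf.mpr ⟨hi, h2⟩
  rw [Submodule.mem_bot] at this
  exact one_ne_zero ((monomial_eq_zero).mp this)

theorem chooseId (d0 d1 d2 : ℕ) :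
    (d0+d1+d2).choose 4 = (d0.choose 4 + d1.choose 4 + d2.choose 4)
      + (d0.choose 3 * (d1+d2) + d1.choose 3 * (d0+d2) + d2.choose 3 * (d0+d1))
      + (d0.choose 2 * d1.choose 2 + d0.choose 2 * d2.choose 2 + d1.choose 2 * d2.choose 2)
      + (d0.choose 2 * d1 * d2 + d0 * d1.choose 2 * d2 + d0 * d1 * d2.choose 2) := by
  rw [add_assoc, Nat.add_choose_eq]
  rw [Finset.Nat.sum_antidiagonal_eq_sum_range_succ_mk]
  simp only [Finset.sum_range_succ, Finset.sum_range_zero]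
  norm_num [Nat.add_choose_eq, Finset.Nat.sum_antidiagonal_eq_sum_range_succ_mk,
    Finset.sum_range_succ]
  ring

end Aux


section Tg
variable {α : Type*} [DecidableEq α]

noncomputable def tg (a b c : α) : α →₀ ℕ :=
  Finsupp.single a 1 + Finsupp.single b 1 + Finsupp.single c 1

theorem tg_apply (a b c x : α) :
    tg a b c x = (if a = x then 1 else 0) + (if b = x then 1 else 0) + (if c = x then 1 else 0) := by
  simp [tg, Finsupp.single_apply]

theorem tg_self_a {a b c : α} (hab : a ≠ b) (hac : a ≠ c) : tg a b c a = 1 := by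
  rw [tg_apply, if_pos rfl, if_neg (Ne.symm hab), if_neg (Ne.symm hac)]

theorem tg_self_b {a b c : α} (hab : a ≠ b) (hbc : b ≠ c) : tg a b c b = 1 := by
  rw [tg_apply, if_neg hab, if_pos rfl, if_neg (Ne.symm hbc)]

theorem tg_self_c {a b c : α} (hac : a ≠ c) (hbc : b ≠ c) : tg a b c c = 1 := by
  rw [tg_apply, if_neg hac, if_neg hbc, if_pos rfl]

theorem tg_supp {a b c x : α} (hx : tg a b c x ≠ 0) : x = a ∨ x = b ∨ x = c := by
  by_contra h
  push_neg at h
  rw [tg_apply, if_neg (fun hh => h.1 hh.symm), if_neg (fun hh => h.2.1 hh.symm),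
    if_neg (fun hh => h.2.2 hh.symm)] at hx
  exact hx rfl

theorem tgq_apply {a b c t : α} (hab : a ≠ b) (hac : a ≠ c) (hbc : b ≠ c)
    (hta : t ≠ a) (htb : t ≠ b) (htc : t ≠ c) (x : α) :
    ((tg a b c + Finsupp.single t 1 : α →₀ ℕ)) x = if x ∈ ({a, b, c, t} : Finset α) then 1 else 0 := by
  rw [Finsupp.add_apply, tg_apply, Finsupp.single_apply]
  simp only [Finset.mem_insert, Finset.mem_singleton]
  split_ifs <;> simp_all <;> simp_all [eq_comm]

variable {A B C : Finset α} (hAB : Disjoint A B) (hAC : Disjoint A C) (hBC : Disjoint B C)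
  {a b c : α} (ha : a ∈ A) (hb : b ∈ B) (hc : c ∈ C)

include hAB hAC hBC ha hb hc

theorem tg_pin {x : α} (hx : tg a b c x ≠ 0) :
    (x ∈ A → x = a) ∧ (x ∈ B → x = b) ∧ (x ∈ C → x = c) := by
  rcases tg_supp hx with rfl | rfl | rfl
  · exact ⟨fun _ => rfl, fun h => absurd h (Finset.disjoint_left.mp hAB ha),
      fun h => absurd h (Finset.disjoint_left.mp hAC ha)⟩
  · exact ⟨fun h => absurd h (Finset.disjoint_right.mp hAB hb), fun _ => rfl,
      fun h => absurd h (Finset.disjoint_left.mp hBC hb)⟩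
  · exact ⟨fun h => absurd h (Finset.disjoint_right.mp hAC hc),
      fun h => absurd h (Finset.disjoint_right.mp hBC hc), fun _ => rfl⟩

theorem eq_tg {m : α →₀ ℕ}
    (hmA : ∃ x ∈ A, m x ≠ 0) (hmB : ∃ x ∈ B, m x ≠ 0) (hmC : ∃ x ∈ C, m x ≠ 0)
    (hle : ∀ x, m x ≤ tg a b c x) : m = tg a b c := by
  have hab : a ≠ b := fun h => Finset.disjoint_left.mp hAB ha (h ▸ hb)
  have hac : a ≠ c := fun h => Finset.disjoint_left.mp hAC ha (h ▸ hc)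
  have hbc : b ≠ c := fun h => Finset.disjoint_left.mp hBC hb (h ▸ hc)
  have hma : m a ≠ 0 := by
    obtain ⟨x, hx, hmx⟩ := hmA
    have htx : tg a b c x ≠ 0 := fun h => hmx (Nat.le_zero.mp (h ▸ hle x))
    rwa [(tg_pin hAB hAC hBC ha hb hc htx).1 hx] at hmx
  have hmb : m b ≠ 0 := by
    obtain ⟨x, hx, hmx⟩ := hmB
    have htx : tg a b c x ≠ 0 := fun h => hmx (Nat.le_zero.mp (h ▸ hle x))
    rwa [(tg_pin hAB hAC hBC ha hb hc htx).2.1 hx] at hmx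
  have hmc : m c ≠ 0 := by
    obtain ⟨x, hx, hmx⟩ := hmC
    have htx : tg a b c x ≠ 0 := fun h => hmx (Nat.le_zero.mp (h ▸ hle x))
    rwa [(tg_pin hAB hAC hBC ha hb hc htx).2.2 hx] at hmx
  ext x
  rcases eq_or_ne x a with rfl | hxa
  · have := hle x; rw [tg_self_a hab hac] at this ⊢; omega
  rcases eq_or_ne x b with rfl | hxb
  · have := hle x; rw [tg_self_b hab hbc] at this ⊢; omega
  rcases eq_or_ne x c with rfl | hxc
  · have := hle x; rw [tg_self_c hac hbc] at this ⊢; omega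
  have h0 : tg a b c x = 0 := by
    by_contra h
    rcases tg_supp h with rfl | rfl | rfl <;> simp_all
  have := hle x
  omega

theorem tri_eq {a' b' c' : α} (ha' : a' ∈ A) (hb' : b' ∈ B) (hc' : c' ∈ C)
    (h : tg a b c = tg a' b' c') : a = a' ∧ b = b' ∧ c = c' := by
  have hab' : a' ≠ b' := fun hh => Finset.disjoint_left.mp hAB ha' (hh ▸ hb')
  have hac' : a' ≠ c' := fun hh => Finset.disjoint_left.mp hAC ha' (hh ▸ hc')
  have hbc' : b' ≠ c' := fun hh => Finset.disjoint_left.mp hBC hb' (hh ▸ hc')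
  have h1 : tg a b c a' ≠ 0 := by rw [h, tg_self_a hab' hac']; exact one_ne_zero
  have h2 : tg a b c b' ≠ 0 := by rw [h, tg_self_b hab' hbc']; exact one_ne_zero
  have h3 : tg a b c c' ≠ 0 := by rw [h, tg_self_c hac' hbc']; exact one_ne_zero
  exact ⟨((tg_pin hAB hAC hBC ha hb hc h1).1 ha').symm,
    ((tg_pin hAB hAC hBC ha hb hc h2).2.1 hb').symm,
    ((tg_pin hAB hAC hBC ha hb hc h3).2.2 hc').symm⟩

end Tg

section Count
variable {K : Type*} [Field K] {n : ℕ}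

set_option maxHeartbeats 2000000 in
theorem count_bound (A : Fin 3 → Finset (Fin n))
    (hdisj : ∀ i j, i ≠ j → Disjoint (A i) (A j))
    (I : Ideal (MvPolynomial (Fin n) K))
    (hcover : A 0 ∪ A 1 ∪ A 2 = Finset.univ)
    (hmono : ∀ m : Fin n →₀ ℕ, (monomial m (1:K)) ∈ I ↔ ∀ i, ∃ j ∈ A i, m j ≠ 0)
    (d : ℕ) (ι : Type) [Fintype ι] [Nonempty ι] (u : ι → (Fin n →₀ ℕ)) (Z : ι → Finset (Fin n))
    (hind : iSupIndep (fun i => stanleySpace K (u i) ((Z i : Set (Fin n)))))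
    (hsup : (⨆ i, stanleySpace K (u i) ((Z i : Set (Fin n)))) = Submodule.restrictScalars K I)
    (hdle : ∀ i, d ≤ (Z i).card) :
    (A 0).card * (A 1).card * (A 2).card * (d - 3) ≤
      (A 0).card.choose 2 * (A 1).card * (A 2).card
        + (A 0).card * ((A 1).card.choose 2) * (A 2).card
        + (A 0).card * (A 1).card * ((A 2).card.choose 2) := by
  classical
  have hd01 : Disjoint (A 0) (A 1) := hdisj 0 1 (by decide)
  have hd02 : Disjoint (A 0) (A 2) := hdisj 0 2 (by decide)
  have hd12 : Disjoint (A 1) (A 2) := hdisj 1 2 (by decide)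
  set T : Finset ((Fin n × Fin n) × Fin n) := (A 0 ×ˢ A 1) ×ˢ A 2 with hT
  set g : (Fin n × Fin n) × Fin n → (Fin n →₀ ℕ) := fun p => tg p.1.1 p.1.2 p.2 with hg
  have hmemT : ∀ p ∈ T, p.1.1 ∈ A 0 ∧ p.1.2 ∈ A 1 ∧ p.2 ∈ A 2 := by
    intro p hp
    simp only [hT, Finset.mem_product] at hp
    exact ⟨hp.1.1, hp.1.2, hp.2⟩
  have hdist : ∀ p ∈ T, p.1.1 ≠ p.1.2 ∧ p.1.1 ≠ p.2 ∧ p.1.2 ≠ p.2 := by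
    intro p hp
    obtain ⟨ha, hb, hc⟩ := hmemT p hp
    exact ⟨fun h => Finset.disjoint_left.mp hd01 ha (h ▸ hb),
      fun h => Finset.disjoint_left.mp hd02 ha (h ▸ hc),
      fun h => Finset.disjoint_left.mp hd12 hb (h ▸ hc)⟩
  have hgI : ∀ p ∈ T, (monomial (g p) (1:K)) ∈ I := by
    intro p hp
    obtain ⟨ha, hb, hc⟩ := hmemT p hp
    obtain ⟨hab, hac, hbc⟩ := hdist p hp
    rw [hmono]
    intro i
    fin_cases i
    · exact ⟨p.1.1, ha, by rw [hg, tg_self_a hab hac]; exact one_ne_zero⟩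
    · exact ⟨p.1.2, hb, by rw [hg, tg_self_b hab hbc]; exact one_ne_zero⟩
    · exact ⟨p.2, hc, by rw [hg, tg_self_c hac hbc]; exact one_ne_zero⟩
  have hSle : ∀ i, stanleySpace K (u i) ((Z i : Set (Fin n))) ≤ Submodule.restrictScalars K I :=
    fun i => hsup ▸ le_iSup (fun i => stanleySpace K (u i) ((Z i : Set (Fin n)))) i
  have huI : ∀ i, (monomial (u i) (1:K)) ∈ I := by
    intro i
    have h0 : (monomial (u i + 0) (1:K)) ∈ stanleySpace K (u i) ((Z i : Set (Fin n))) :=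
      mem_stanley _ 0 _ (by simp)
    rw [add_zero] at h0
    exact hSle i h0
  have hex : ∀ p ∈ T, ∃ j, u j = g p := by
    intro p hp
    obtain ⟨ha, hb, hc⟩ := hmemT p hp
    have h1 : (monomial (g p) (1:K)) ∈ ⨆ i, stanleySpace K (u i) ((Z i : Set (Fin n))) := by
      rw [hsup]; exact hgI p hp
    obtain ⟨j, v, hgv, hvZ⟩ := mono_mem_iSup u (fun i => ((Z i : Set (Fin n)))) _ h1
    refine ⟨j, ?_⟩
    have hujI := (hmono (u j)).mp (huI j)
    have hgv' : tg p.1.1 p.1.2 p.2 = u j + v := hgv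
    exact eq_tg hd01 hd02 hd12 ha hb hc (hujI 0) (hujI 1) (hujI 2)
      (fun x => by rw [hgv', Finsupp.add_apply]; exact Nat.le_add_right _ _)
  set idx : ((Fin n × Fin n) × Fin n) → ι := fun p =>
    if h : ∃ j, u j = g p then h.choose else Classical.arbitrary ι with hidxdef
  have hidx : ∀ p ∈ T, u (idx p) = g p := by
    intro p hp
    have h := hex p hp
    simp only [hidxdef, dif_pos h]
    exact h.choose_spec
  set Dom : Finset ((_ : (Fin n × Fin n) × Fin n) × Fin n) :=
    T.sigma (fun p => Z (idx p) \ {p.1.1, p.1.2, p.2}) with hDom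
  set F : ((_ : (Fin n × Fin n) × Fin n) × Fin n) →
      Finset (Fin n) × Finset (Fin n) × Finset (Fin n) := fun q =>
    (({q.1.1.1, q.1.1.2, q.1.2, q.2} : Finset (Fin n)) ∩ A 0,
     ({q.1.1.1, q.1.1.2, q.1.2, q.2} : Finset (Fin n)) ∩ A 1,
     ({q.1.1.1, q.1.1.2, q.1.2, q.2} : Finset (Fin n)) ∩ A 2) with hF
  set Target : Finset (Finset (Fin n) × Finset (Fin n) × Finset (Fin n)) :=
    ((A 0).powersetCard 2 ×ˢ ((A 1).powersetCard 1 ×ˢ (A 2).powersetCard 1))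
      ∪ ((A 0).powersetCard 1 ×ˢ ((A 1).powersetCard 2 ×ˢ (A 2).powersetCard 1))
      ∪ ((A 0).powersetCard 1 ×ˢ ((A 1).powersetCard 1 ×ˢ (A 2).powersetCard 2)) with hTar
  have hmemDom : ∀ q ∈ Dom, q.1 ∈ T ∧ q.2 ∈ Z (idx q.1) ∧
      q.2 ≠ q.1.1.1 ∧ q.2 ≠ q.1.1.2 ∧ q.2 ≠ q.1.2 := by
    intro q hq
    rw [hDom, Finset.mem_sigma] at hq
    obtain ⟨hq1, hq2⟩ := hq
    rw [Finset.mem_sdiff] at hq2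
    refine ⟨hq1, hq2.1, ?_⟩
    have := hq2.2
    simp only [Finset.mem_insert, Finset.mem_singleton] at this
    push_neg at this
    exact this
  have hmmem : ∀ q ∈ Dom, (monomial (g q.1 + Finsupp.single q.2 1) (1:K))
      ∈ stanleySpace K (u (idx q.1)) ((Z (idx q.1) : Set (Fin n))) := by
    intro q hq
    obtain ⟨hq1, hq2, _⟩ := hmemDom q hq
    rw [← hidx q.1 hq1]
    apply mem_stanley
    intro x hx
    have := Finsupp.support_single_subset (Finset.mem_coe.mp hx)
    simp only [Finset.mem_singleton] at this
    subst this
    exact Finset.mem_coe.mpr hq2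
  have hFmaps : ∀ q ∈ Dom, F q ∈ Target := by
    intro q hq
    obtain ⟨hq1, hq2, hta, htb, htc⟩ := hmemDom q hq
    obtain ⟨ha, hb, hc⟩ := hmemT q.1 hq1
    obtain ⟨hab, hac, hbc⟩ := hdist q.1 hq1
    set a := q.1.1.1
    set b := q.1.1.2
    set c := q.1.2
    set t := q.2
    have hbA0 : b ∉ A 0 := Finset.disjoint_right.mp hd01 hb
    have hcA0 : c ∉ A 0 := Finset.disjoint_right.mp hd02 hc
    have haA1 : a ∉ A 1 := Finset.disjoint_left.mp hd01 ha
    have hcA1 : c ∉ A 1 := Finset.disjoint_right.mp hd12 hc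
    have haA2 : a ∉ A 2 := Finset.disjoint_left.mp hd02 ha
    have hbA2 : b ∉ A 2 := Finset.disjoint_left.mp hd12 hb
    have htU : t ∈ A 0 ∨ t ∈ A 1 ∨ t ∈ A 2 := by
      have h := Finset.mem_univ t
      rw [← hcover] at h
      simp only [Finset.mem_union] at h
      tauto
    have hFq : F q = (({a,b,c,t} : Finset (Fin n)) ∩ A 0,
        ({a,b,c,t} : Finset (Fin n)) ∩ A 1, ({a,b,c,t} : Finset (Fin n)) ∩ A 2) := rfl
    rcases htU with htA | htA | htA
    · have e0 : ({a,b,c,t} : Finset (Fin n)) ∩ A 0 = {a, t} := by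
        ext x
        simp only [Finset.mem_inter, Finset.mem_insert, Finset.mem_singleton]
        constructor
        · rintro ⟨(rfl|rfl|rfl|rfl), hx⟩ <;> tauto
        · rintro (rfl|rfl) <;> tauto
      have e1 : ({a,b,c,t} : Finset (Fin n)) ∩ A 1 = {b} := by
        have htA1 : t ∉ A 1 := Finset.disjoint_left.mp hd01 htA
        ext x
        simp only [Finset.mem_inter, Finset.mem_insert, Finset.mem_singleton]
        constructor
        · rintro ⟨(rfl|rfl|rfl|rfl), hx⟩ <;> tauto
        · rintro rfl <;> tauto
      have e2 : ({a,b,c,t} : Finset (Fin n)) ∩ A 2 = {c} := by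
        have htA2 : t ∉ A 2 := Finset.disjoint_left.mp hd02 htA
        ext x
        simp only [Finset.mem_inter, Finset.mem_insert, Finset.mem_singleton]
        constructor
        · rintro ⟨(rfl|rfl|rfl|rfl), hx⟩ <;> tauto
        · rintro rfl <;> tauto
      rw [hTar]
      apply Finset.mem_union_left
      apply Finset.mem_union_left
      rw [hFq, e0, e1, e2, Finset.mem_product, Finset.mem_product]
      refine ⟨Finset.mem_powersetCard.mpr ⟨?_, ?_⟩,
        Finset.mem_powersetCard.mpr ⟨?_, ?_⟩, Finset.mem_powersetCard.mpr ⟨?_, ?_⟩⟩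
      · rw [Finset.insert_subset_iff, Finset.singleton_subset_iff]; exact ⟨ha, htA⟩
      · rw [Finset.card_insert_of_notMem (by simpa using (Ne.symm hta)),
          Finset.card_singleton]
      · rwa [Finset.singleton_subset_iff]
      · exact Finset.card_singleton b
      · rwa [Finset.singleton_subset_iff]
      · exact Finset.card_singleton c
    · have e0 : ({a,b,c,t} : Finset (Fin n)) ∩ A 0 = {a} := by
        have htA0 : t ∉ A 0 := Finset.disjoint_right.mp hd01 htA
        ext x
        simp only [Finset.mem_inter, Finset.mem_insert, Finset.mem_singleton]
        constructor
        · rintro ⟨(rfl|rfl|rfl|rfl), hx⟩ <;> tauto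
        · rintro rfl <;> tauto
      have e1 : ({a,b,c,t} : Finset (Fin n)) ∩ A 1 = {b, t} := by
        ext x
        simp only [Finset.mem_inter, Finset.mem_insert, Finset.mem_singleton]
        constructor
        · rintro ⟨(rfl|rfl|rfl|rfl), hx⟩ <;> tauto
        · rintro (rfl|rfl) <;> tauto
      have e2 : ({a,b,c,t} : Finset (Fin n)) ∩ A 2 = {c} := by
        have htA2 : t ∉ A 2 := Finset.disjoint_left.mp hd12 htA
        ext x
        simp only [Finset.mem_inter, Finset.mem_insert, Finset.mem_singleton]
        constructor
        · rintro ⟨(rfl|rfl|rfl|rfl), hx⟩ <;> tauto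
        · rintro rfl <;> tauto
      rw [hTar]
      apply Finset.mem_union_left
      apply Finset.mem_union_right
      rw [hFq, e0, e1, e2, Finset.mem_product, Finset.mem_product]
      refine ⟨Finset.mem_powersetCard.mpr ⟨?_, ?_⟩,
        Finset.mem_powersetCard.mpr ⟨?_, ?_⟩, Finset.mem_powersetCard.mpr ⟨?_, ?_⟩⟩
      · rwa [Finset.singleton_subset_iff]
      · exact Finset.card_singleton a
      · rw [Finset.insert_subset_iff, Finset.singleton_subset_iff]; exact ⟨hb, htA⟩
      · rw [Finset.card_insert_of_notMem (by simpa using (Ne.symm htb)),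
          Finset.card_singleton]
      · rwa [Finset.singleton_subset_iff]
      · exact Finset.card_singleton c
    · have e0 : ({a,b,c,t} : Finset (Fin n)) ∩ A 0 = {a} := by
        have htA0 : t ∉ A 0 := Finset.disjoint_right.mp hd02 htA
        ext x
        simp only [Finset.mem_inter, Finset.mem_insert, Finset.mem_singleton]
        constructor
        · rintro ⟨(rfl|rfl|rfl|rfl), hx⟩ <;> tauto
        · rintro rfl <;> tauto
      have e1 : ({a,b,c,t} : Finset (Fin n)) ∩ A 1 = {b} := by
        have htA1 : t ∉ A 1 := Finset.disjoint_right.mp hd12 htA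
        ext x
        simp only [Finset.mem_inter, Finset.mem_insert, Finset.mem_singleton]
        constructor
        · rintro ⟨(rfl|rfl|rfl|rfl), hx⟩ <;> tauto
        · rintro rfl <;> tauto
      have e2 : ({a,b,c,t} : Finset (Fin n)) ∩ A 2 = {c, t} := by
        ext x
        simp only [Finset.mem_inter, Finset.mem_insert, Finset.mem_singleton]
        constructor
        · rintro ⟨(rfl|rfl|rfl|rfl), hx⟩ <;> tauto
        · rintro (rfl|rfl) <;> tauto
      rw [hTar]
      apply Finset.mem_union_right
      rw [hFq, e0, e1, e2, Finset.mem_product, Finset.mem_product]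
      refine ⟨Finset.mem_powersetCard.mpr ⟨?_, ?_⟩,
        Finset.mem_powersetCard.mpr ⟨?_, ?_⟩, Finset.mem_powersetCard.mpr ⟨?_, ?_⟩⟩
      · rwa [Finset.singleton_subset_iff]
      · exact Finset.card_singleton a
      · rwa [Finset.singleton_subset_iff]
      · exact Finset.card_singleton b
      · rw [Finset.insert_subset_iff, Finset.singleton_subset_iff]; exact ⟨hc, htA⟩
      · rw [Finset.card_insert_of_notMem (by simpa using (Ne.symm htc)),
          Finset.card_singleton]
  have hFinj : Set.InjOn F ↑Dom := by
    rintro ⟨⟨⟨a, b⟩, c⟩, t⟩ hq ⟨⟨⟨a', b'⟩, c'⟩, t'⟩ hq' hFeq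
    rw [Finset.mem_coe] at hq hq'
    obtain ⟨hq1, hq2, hta, htb, htc⟩ := hmemDom _ hq
    obtain ⟨hq1', hq2', hta', htb', htc'⟩ := hmemDom _ hq'
    obtain ⟨ha, hb, hc⟩ := hmemT _ hq1
    obtain ⟨hab, hac, hbc⟩ := hdist _ hq1
    obtain ⟨ha', hb', hc'⟩ := hmemT _ hq1'
    obtain ⟨hab', hac', hbc'⟩ := hdist _ hq1'
    simp only at ha hb hc ha' hb' hc' hab hac hbc hab' hac' hbc' hta htb htc hta' htb' htc' hq2 hq2'
    have h0 : ({a,b,c,t} : Finset (Fin n)) ∩ A 0 = ({a',b',c',t'} : Finset (Fin n)) ∩ A 0 :=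
      congrArg Prod.fst hFeq
    have h1 : ({a,b,c,t} : Finset (Fin n)) ∩ A 1 = ({a',b',c',t'} : Finset (Fin n)) ∩ A 1 :=
      congrArg (fun z => z.2.1) hFeq
    have h2 : ({a,b,c,t} : Finset (Fin n)) ∩ A 2 = ({a',b',c',t'} : Finset (Fin n)) ∩ A 2 :=
      congrArg (fun z => z.2.2) hFeq
    have hmemiff : ∀ (B : Finset (Fin n)),
        ({a,b,c,t} : Finset (Fin n)) ∩ B = ({a',b',c',t'} : Finset (Fin n)) ∩ B →
        ∀ x ∈ B, (x ∈ ({a,b,c,t} : Finset (Fin n)) ↔ x ∈ ({a',b',c',t'} : Finset (Fin n))) :=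
      fun B hB x hx =>
        ⟨fun h => (Finset.mem_inter.mp (hB ▸ Finset.mem_inter.mpr ⟨h, hx⟩)).1,
         fun h => (Finset.mem_inter.mp (hB.symm ▸ Finset.mem_inter.mpr ⟨h, hx⟩)).1⟩
    have hS : ({a,b,c,t} : Finset (Fin n)) = ({a',b',c',t'} : Finset (Fin n)) := by
      ext x
      have hxU : x ∈ A 0 ∨ x ∈ A 1 ∨ x ∈ A 2 := by
        have h := Finset.mem_univ x
        rw [← hcover] at h
        simp only [Finset.mem_union] at h
        tauto
      rcases hxU with hx | hx | hx
      · exact hmemiff _ h0 x hx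
      · exact hmemiff _ h1 x hx
      · exact hmemiff _ h2 x hx
    have hm : tg a b c + Finsupp.single t 1 = tg a' b' c' + Finsupp.single t' 1 := by
      ext x
      rw [tgq_apply hab hac hbc (Ne.symm (fun h => hta h.symm)) (fun h => htb h)
        (fun h => htc h), tgq_apply hab' hac' hbc' (fun h => hta' h) (fun h => htb' h)
        (fun h => htc' h), hS]
    have hmm1 := hmmem _ hq
    have hmm2 := hmmem _ hq'
    simp only at hmm1 hmm2
    have hii : idx ((a, b), c) = idx ((a', b'), c') := by
      by_contra hne
      refine mono_not_two (fun i => stanleySpace K (u i) ((Z i : Set (Fin n)))) hind hne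
        (tg a b c + Finsupp.single t 1) hmm1 ?_
      rw [show (tg a b c + Finsupp.single t 1) = (tg a' b' c' + Finsupp.single t' 1) from hm]
      exact hmm2
    have hgg : tg a b c = tg a' b' c' := by
      have e1 := hidx _ hq1
      have e2 := hidx _ hq1'
      have e1' : u (idx ((a, b), c)) = tg a b c := e1
      have e2' : u (idx ((a', b'), c')) = tg a' b' c' := e2
      rw [← e1', ← e2', hii]
    obtain ⟨hea, heb, hec⟩ := tri_eq hd01 hd02 hd12 ha hb hc ha' hb' hc' hgg
    subst hea; subst heb; subst hec
    have htt : t = t' := by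
      have ht'mem : t' ∈ ({a,b,c,t} : Finset (Fin n)) := by
        rw [hS]
        simp
      simp only [Finset.mem_insert, Finset.mem_singleton] at ht'mem
      rcases ht'mem with h | h | h | h
      · exact absurd h hta'
      · exact absurd h htb'
      · exact absurd h htc'
      · exact h.symm
    subst htt
    rfl
  have hcards : Dom.card ≤ Target.card := Finset.card_le_card_of_injOn F hFmaps hFinj
  have hDomcard : Dom.card = ∑ p ∈ T, (Z (idx p) \ {p.1.1, p.1.2, p.2}).card :=
    Finset.card_sigma _ _
  have hlow : ∀ p ∈ T, d - 3 ≤ (Z (idx p) \ {p.1.1, p.1.2, p.2}).card := by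
    intro p hp
    have h1 := Finset.le_card_sdiff ({p.1.1, p.1.2, p.2} : Finset (Fin n)) (Z (idx p))
    have h2 : ({p.1.1, p.1.2, p.2} : Finset (Fin n)).card ≤ 3 := by
      have i1 := Finset.card_insert_le p.1.1 ({p.1.2, p.2} : Finset (Fin n))
      have i2 := Finset.card_insert_le p.1.2 ({p.2} : Finset (Fin n))
      have i3 : ({p.2} : Finset (Fin n)).card = 1 := Finset.card_singleton _
      omega
    have h3 := hdle (idx p)
    omega
  have hsum2 : T.card * (d - 3) ≤ Dom.card := by
    rw [hDomcard]
    calc T.card * (d - 3) = ∑ _p ∈ T, (d - 3) := by rw [Finset.sum_const, smul_eq_mul]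
    _ ≤ _ := Finset.sum_le_sum hlow
  have hTcard : T.card = (A 0).card * (A 1).card * (A 2).card := by
    rw [hT, Finset.card_product, Finset.card_product]
  have hD1 : Disjoint
      ((A 0).powersetCard 2 ×ˢ ((A 1).powersetCard 1 ×ˢ (A 2).powersetCard 1))
      ((A 0).powersetCard 1 ×ˢ ((A 1).powersetCard 2 ×ˢ (A 2).powersetCard 1)) := by
    rw [Finset.disjoint_left]
    intro x hx1 hx2
    have e1 := (Finset.mem_powersetCard.mp (Finset.mem_product.mp hx1).1).2
    have e2 := (Finset.mem_powersetCard.mp (Finset.mem_product.mp hx2).1).2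
    omega
  have hD2 : Disjoint
      (((A 0).powersetCard 2 ×ˢ ((A 1).powersetCard 1 ×ˢ (A 2).powersetCard 1))
        ∪ ((A 0).powersetCard 1 ×ˢ ((A 1).powersetCard 2 ×ˢ (A 2).powersetCard 1)))
      ((A 0).powersetCard 1 ×ˢ ((A 1).powersetCard 1 ×ˢ (A 2).powersetCard 2)) := by
    rw [Finset.disjoint_left]
    intro x hx1 hx3
    have e3 := (Finset.mem_powersetCard.mp
      (Finset.mem_product.mp (Finset.mem_product.mp hx3).2).2).2
    rcases Finset.mem_union.mp hx1 with h | h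
    · have := (Finset.mem_powersetCard.mp
        (Finset.mem_product.mp (Finset.mem_product.mp h).2).2).2
      omega
    · have := (Finset.mem_powersetCard.mp
        (Finset.mem_product.mp (Finset.mem_product.mp h).2).2).2
      omega
  have hTargetcard : Target.card = (A 0).card.choose 2 * (A 1).card * (A 2).card
      + (A 0).card * ((A 1).card.choose 2) * (A 2).card
      + (A 0).card * (A 1).card * ((A 2).card.choose 2) := by
    rw [hTar, Finset.card_union_of_disjoint hD2, Finset.card_union_of_disjoint hD1]
    simp only [Finset.card_product, Finset.card_powersetCard, Nat.choose_one_right]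
    ring
  calc (A 0).card * (A 1).card * (A 2).card * (d - 3) = T.card * (d - 3) := by rw [hTcard]
  _ ≤ Dom.card := hsum2
  _ ≤ Target.card := hcards
  _ = _ := hTargetcard

end Count


set_option maxHeartbeats 1000000 in
/-- **Theorem 3.7.** For `I = P_1 ∩ P_2 ∩ P_3` with monomial primes generated by pairwise
disjoint sets of variables, `P_1 + P_2 + P_3 = m` and `d_i = height P_i`, one has
`sdepth I ≤ 3 + (1/(d_1 d_2 d_3)) [C(n,4) - Σ C(d_i,4) - Σ C(d_i,3)(n-d_i)
  - Σ_{i<j} C(d_i,2) C(d_j,2)]`. -/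
theorem sdepth_le_three_primes_binomial_bound {K : Type*} [Field K] {n : ℕ}
    (A : Fin 3 → Finset (Fin n))
    (hdisj : ∀ i j, i ≠ j → Disjoint (A i) (A j))
    (P : Fin 3 → Ideal (MvPolynomial (Fin n) K))
    (hP : ∀ i, P i = Ideal.span
      ((fun j => (X j : MvPolynomial (Fin n) K)) '' (A i : Set (Fin n))))
    (hsum : P 0 ⊔ P 1 ⊔ P 2 = Ideal.span (Set.range (X : Fin n → MvPolynomial (Fin n) K)))
    (d : Fin 3 → ℕ) (hd : ∀ i, d i = (A i).card)
    (I : Ideal (MvPolynomial (Fin n) K)) (hI : I = P 0 ⊓ P 1 ⊓ P 2) :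
    (sdepthIdeal I : ℚ) ≤ 3 + (1 / ((d 0 : ℚ) * (d 1 : ℚ) * (d 2 : ℚ))) *
      ((n.choose 4 : ℚ) - (∑ i, ((d i).choose 4 : ℚ))
        - (∑ i, ((d i).choose 3 : ℚ) * ((n : ℚ) - (d i : ℚ)))
        - (((d 0).choose 2 : ℚ) * ((d 1).choose 2 : ℚ)
            + ((d 0).choose 2 : ℚ) * ((d 2).choose 2 : ℚ)
            + ((d 1).choose 2 : ℚ) * ((d 2).choose 2 : ℚ))) := by
  classical
  have hcover : A 0 ∪ A 1 ∪ A 2 = Finset.univ := by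
    have hle : Ideal.span (Set.range (X : Fin n → MvPolynomial (Fin n) K)) ≤
        Ideal.span ((fun j => (X j : MvPolynomial (Fin n) K)) ''
          ((A 0 ∪ A 1 ∪ A 2 : Finset (Fin n)) : Set (Fin n))) := by
      rw [← hsum]
      refine sup_le (sup_le ?_ ?_) ?_ <;> rw [hP] <;>
        refine Ideal.span_mono (Set.image_mono ?_) <;> intro x hx <;>
        simp only [Finset.coe_union, Set.mem_union, Finset.mem_coe] at * <;> tauto
    apply Finset.eq_univ_of_forall
    intro j
    have hXj : (X j : MvPolynomial (Fin n) K) ∈ Ideal.span (Set.range X) :=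
      Ideal.subset_span ⟨j, rfl⟩
    have hXm : (X j : MvPolynomial (Fin n) K) = monomial (Finsupp.single j 1) 1 := rfl
    have hmem := (memA (A 0 ∪ A 1 ∪ A 2) (Finsupp.single j 1)).mp (by rw [← hXm]; exact hle hXj)
    obtain ⟨x, hxmem, hxne⟩ := hmem
    have hxj : x = j := by
      by_contra hne
      rw [Finsupp.single_apply, if_neg (fun h => hne h.symm)] at hxne
      exact hxne rfl
    exact hxj ▸ hxmem
  have hdul : Disjoint (A 0 ∪ A 1) (A 2) :=
    Finset.disjoint_union_left.mpr ⟨hdisj 0 2 (by decide), hdisj 1 2 (by decide)⟩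
  have hn : n = (A 0).card + (A 1).card + (A 2).card := by
    have h1 : (Finset.univ : Finset (Fin n)).card = n := Finset.card_fin n
    rw [← hcover, Finset.card_union_of_disjoint hdul,
      Finset.card_union_of_disjoint (hdisj 0 1 (by decide))] at h1
    omega
  have hmono : ∀ m : Fin n →₀ ℕ, (monomial m (1:K)) ∈ I ↔ ∀ i, ∃ j ∈ A i, m j ≠ 0 := by
    intro m
    rw [hI]
    constructor
    · intro hm i
      have h0 := (Submodule.mem_inf.mp (Submodule.mem_inf.mp hm).1).1
      have h1 := (Submodule.mem_inf.mp (Submodule.mem_inf.mp hm).1).2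
      have h2 := (Submodule.mem_inf.mp hm).2
      have hall : ∀ i : Fin 3, (monomial m (1:K)) ∈ P i := by
        intro i
        fin_cases i <;> assumption
      exact (memA _ _).mp (hP i ▸ hall i)
    · intro h
      refine Submodule.mem_inf.mpr ⟨Submodule.mem_inf.mpr ⟨?_, ?_⟩, ?_⟩
      · rw [hP 0]; exact (memA _ _).mpr (h 0)
      · rw [hP 1]; exact (memA _ _).mpr (h 1)
      · rw [hP 2]; exact (memA _ _).mpr (h 2)
  set N : ℕ := (A 0).card.choose 2 * (A 1).card * (A 2).card
      + (A 0).card * ((A 1).card.choose 2) * (A 2).card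
      + (A 0).card * (A 1).card * ((A 2).card.choose 2) with hN
  set Dn : ℕ := (A 0).card * (A 1).card * (A 2).card with hDn
  have key' : (((((A 0).card + (A 1).card + (A 2).card)).choose 4 : ℕ) : ℚ) =
      ((((A 0).card.choose 4 + (A 1).card.choose 4 + (A 2).card.choose 4)
      + ((A 0).card.choose 3 * ((A 1).card+(A 2).card)
          + (A 1).card.choose 3 * ((A 0).card+(A 2).card)
          + (A 2).card.choose 3 * ((A 0).card+(A 1).card))
      + ((A 0).card.choose 2 * (A 1).card.choose 2 + (A 0).card.choose 2 * (A 2).card.choose 2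
          + (A 1).card.choose 2 * (A 2).card.choose 2)
      + ((A 0).card.choose 2 * (A 1).card * (A 2).card
          + (A 0).card * (A 1).card.choose 2 * (A 2).card
          + (A 0).card * (A 1).card * (A 2).card.choose 2) : ℕ) : ℚ) := by
    exact_mod_cast congrArg (Nat.cast (R := ℚ)) (chooseId (A 0).card (A 1).card (A 2).card)
  have hχ : ((n.choose 4 : ℚ) - (∑ i, ((d i).choose 4 : ℚ))
        - (∑ i, ((d i).choose 3 : ℚ) * ((n : ℚ) - (d i : ℚ)))
        - (((d 0).choose 2 : ℚ) * ((d 1).choose 2 : ℚ)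
            + ((d 0).choose 2 : ℚ) * ((d 2).choose 2 : ℚ)
            + ((d 1).choose 2 : ℚ) * ((d 2).choose 2 : ℚ))) = (N : ℚ) := by
    simp only [hd, Fin.sum_univ_three, hN]
    have hnc : ((n.choose 4 : ℕ) : ℚ)
        = (((((A 0).card + (A 1).card + (A 2).card)).choose 4 : ℕ) : ℚ) :=
      congrArg (fun k : ℕ => ((k.choose 4 : ℕ) : ℚ)) hn
    have hn' : (n : ℚ) = ((A 0).card : ℚ) + ((A 1).card : ℚ) + ((A 2).card : ℚ) := by
      exact_mod_cast congrArg (Nat.cast (R := ℚ)) hn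
    rw [hnc, hn']
    push_cast at key' ⊢
    linear_combination key'
  have hDq : ((d 0 : ℚ) * (d 1 : ℚ) * (d 2 : ℚ)) = (Dn : ℚ) := by
    simp only [hd, hDn]
    push_cast
    ring
  rw [hχ, hDq]
  unfold sdepthIdeal
  rcases Set.eq_empty_or_nonempty {d | ∃ (ι : Type) (_ : Fintype ι) (_ : Nonempty ι)
      (u : ι → (Fin n →₀ ℕ)) (Z : ι → Finset (Fin n)),
      IsStanleyDecompOfIdeal I u Z ∧ ∀ i, d ≤ (Z i).card} with hE | hNE
  · rw [hE, csSup_empty]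
    have : ((⊥ : ℕ) : ℚ) = 0 := by norm_num
    rw [this]
    positivity
  · have hbdd : BddAbove {d | ∃ (ι : Type) (_ : Fintype ι) (_ : Nonempty ι)
        (u : ι → (Fin n →₀ ℕ)) (Z : ι → Finset (Fin n)),
        IsStanleyDecompOfIdeal I u Z ∧ ∀ i, d ≤ (Z i).card} := by
      refine ⟨n, ?_⟩
      rintro s ⟨ι, hfin, hne, u, Z, hSD, hZ⟩
      obtain ⟨i0⟩ := hne
      exact (hZ i0).trans ((Finset.card_le_univ _).trans_eq (Finset.card_fin n))
    have hmem := Nat.sSup_mem hNE hbdd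
    set s := sSup {d | ∃ (ι : Type) (_ : Fintype ι) (_ : Nonempty ι)
        (u : ι → (Fin n →₀ ℕ)) (Z : ι → Finset (Fin n)),
        IsStanleyDecompOfIdeal I u Z ∧ ∀ i, d ≤ (Z i).card} with hs
    obtain ⟨ι, hfin, hne, u, Z, ⟨hind, hsupEq⟩, hZ⟩ := hmem
    haveI := hfin
    haveI := hne
    have hDpos : 0 < Dn := by
      rw [hDn]
      have hA : ∀ i : Fin 3, 0 < (A i).card := by
        intro i
        rcases Finset.eq_empty_or_nonempty (A i) with he | hne'
        · exfalso
          have hPbot : P i = ⊥ := by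
            rw [hP i, he]
            simp
          have hIbot : I = ⊥ := by
            rw [eq_bot_iff, hI, ← hPbot]
            fin_cases i
            · exact inf_le_left.trans inf_le_left
            · exact inf_le_left.trans inf_le_right
            · exact inf_le_right
          obtain ⟨i0⟩ := hne
          have hm0 : (monomial (u i0 + 0) (1:K)) ∈ stanleySpace K (u i0) ((Z i0 : Set (Fin n))) :=
            mem_stanley _ 0 _ (by simp)
          have hle0 : stanleySpace K (u i0) ((Z i0 : Set (Fin n)))
              ≤ Submodule.restrictScalars K I :=
            hsupEq ▸ le_iSup (fun i => stanleySpace K (u i) ((Z i : Set (Fin n)))) i0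
          have h0 := hle0 hm0
          rw [hIbot] at h0
          simp only [Submodule.restrictScalars_bot, Submodule.mem_bot] at h0
          exact one_ne_zero ((monomial_eq_zero).mp h0)
        · exact Finset.card_pos.mpr hne'
      exact mul_pos (mul_pos (hA 0) (hA 1)) (hA 2)
    have hcount := count_bound A hdisj I hcover hmono s ι u Z hind hsupEq hZ
    have hcount' : Dn * (s - 3) ≤ N := by rw [hDn, hN]; exact hcount
    have hDqpos : (0:ℚ) < (Dn : ℚ) := by exact_mod_cast hDpos
    rcases le_or_gt s 3 with h3 | h3
    · have : (s:ℚ) ≤ 3 := by exact_mod_cast h3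
      have hnn : (0:ℚ) ≤ 1 / (Dn:ℚ) * (N:ℚ) := by positivity
      linarith
    · have h3' : 3 ≤ s := le_of_lt h3
      have hc : ((Dn * (s - 3) : ℕ) : ℚ) ≤ (N : ℚ) := by exact_mod_cast hcount'
      push_cast [Nat.cast_sub h3'] at hc
      have hdiv : (s:ℚ) - 3 ≤ (N:ℚ) / (Dn:ℚ) := by
        rw [le_div_iff₀ hDqpos]
        linarith
      have hrw : 1 / (Dn:ℚ) * (N:ℚ) = (N:ℚ) / (Dn:ℚ) := by ring
      linarith
end
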